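/- arXiv:1403.0342 — 11 statements merged into one kernel-verified Lean document; each statement's English description precedes it below -/
import Mathlib

section
/- Let G and H be finite graphs (loopless mixed graphs with self-paired arc sets, i.e. simple undirected graphs). Then G and H are TF-isomorphic if and only if their canonical double covers CDC(G) and CDC(H) are isomorphic (as graphs, under an arbitrary isomorphism, not necessarily colour-preserving). -/
/-- The canonical double cover of a simple graph `G`: the simple graph on
`V × Bool` in which `(u, i)` is adjacent to `(v, j)` iff `i ≠ j` and `u` is adjacent
to `v` in `G`. -/
def CDC {V : Type*} (G : SimpleGraph V) : SimpleGraph (V × Bool) where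
  Adj p q := p.2 ≠ q.2 ∧ G.Adj p.1 q.1
  symm := ⟨fun p q h => ⟨h.1.symm, h.2.symm⟩⟩
  loopless := ⟨fun p h => h.1 rfl⟩

/-!
A TF-isomorphism `(α, β)` is the same thing as an isomorphism `CDC G ≃g CDC H` that preserves
the color (second coordinate): use `α` on color `false` and `β` on color `true`.

So it suffices to make an arbitrary isomorphism `f` color-preserving. Whether `f` swaps the two
colors is constant on each connected component of `CDC G`, so the recoloring
`x ↦ ((f x).1, x.2)` is injective and reflects adjacency on every component `K`; let `L₀ K` be the component it sends `K` into, and `L₁ K` the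
one obtained in the same way from `f ∘ twist`. Recording also the color shift makes
`(K, b) ↦ L_b K` part of an injection of `components × Bool` into itself, so by Hall's theorem
one can choose `b` for each `K` such that `K ↦ L_b K` is injective. Gluing the chosen
recolorings gives a color-preserving embedding, which is onto by finiteness.
-/

open Function

open Finset in
theorem exists_injective_choice_of_injective_prod {X Y κ : Type*} [Fintype κ] [Nonempty κ]
    (L : κ → X → Y) (θ : X × κ → Y × κ) (hθ : Injective θ) (hL : ∀ x i, (θ (x, i)).1 = L i x) :
    ∃ c : X → κ, Injective fun x => L (c x) x := by
  classical
  let t : X → Finset Y := fun x => univ.image (L · x)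
  have hall (s : Finset X) : #s ≤ #(s.biUnion t) := by
    have hmaps : Set.MapsTo θ (s ×ˢ (univ : Finset κ) : Finset _)
        (s.biUnion t ×ˢ (univ : Finset κ) : Finset _) := by
      rintro ⟨x, i⟩ hx
      simp only [coe_product, Set.mem_prod, mem_coe, mem_univ, and_true] at hx ⊢
      exact mem_biUnion.2 ⟨x, hx, by simp [t, ← hL]⟩
    have hcard := card_le_card_of_injOn θ hmaps hθ.injOn
    rw [card_product, card_product] at hcard
    exact Nat.le_of_mul_le_mul_right hcard Fintype.card_pos
  obtain ⟨m, hm, hmt⟩ := (all_card_le_biUnion_card_iff_exists_injective t).1 hall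
  choose c hc using fun x => mem_image.1 (hmt x)
  refine ⟨c, ?_⟩
  simpa only [(hc _).2] using hm

def Equiv.fiberOfSndEq {α β γ : Type*} (e : α × γ ≃ β × γ) (he : ∀ p, (e p).2 = p.2) (c : γ) :
    α ≃ β where
  toFun a := (e (a, c)).1
  invFun b := (e.symm (b, c)).1
  left_inv a := by
    simp only
    rw [show ((e (a, c)).1, c) = e (a, c) from Prod.ext rfl (he (a, c)).symm,
      e.symm_apply_apply]
  right_inv b := by
    simp only
    rw [show ((e.symm (b, c)).1, c) = e.symm (b, c) from
      Prod.ext rfl (by simpa using he (e.symm (b, c))), e.apply_symm_apply]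

namespace SimpleGraph

variable {α β ι : Type*} {Γ : SimpleGraph α} {Δ : SimpleGraph β}

theorem Reachable.eq_of_forall_adj {g : α → β} (hg : ∀ ⦃x y⦄, Γ.Adj x y → g x = g y) {x y : α}
    (h : Γ.Reachable x y) : g x = g y := by
  obtain ⟨p⟩ := h
  induction p with
  | nil => rfl
  | cons hxy _ ih => exact (hg hxy).trans ih

def Hom.glue (φ : ι → Γ →g Δ) (c : Γ.ConnectedComponent → ι) : Γ →g Δ where
  toFun x := φ (c (Γ.connectedComponentMk x)) x
  map_rel' {x y} h := by
    rw [ConnectedComponent.connectedComponentMk_eq_of_adj h]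
    exact (φ _).map_adj h

theorem Hom.glue_injective {φ : ι → Γ →g Δ} {c : Γ.ConnectedComponent → ι}
    (hφ : ∀ i x y, Γ.Reachable x y → φ i x = φ i y → x = y)
    (hc : Injective fun K : Γ.ConnectedComponent => K.map (φ (c K))) :
    Injective (Hom.glue φ c) := by
  intro x y h
  have hK : Γ.connectedComponentMk x = Γ.connectedComponentMk y :=
    hc (congrArg Δ.connectedComponentMk h)
  simp only [Hom.glue, RelHom.coeFn_mk, hK] at h
  exact hφ _ x y (ConnectedComponent.exact hK) h

theorem Hom.glue_adj_iff {φ : ι → Γ →g Δ} {c : Γ.ConnectedComponent → ι}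
    (hφ : ∀ i x y, Γ.Reachable x y → Δ.Adj (φ i x) (φ i y) → Γ.Adj x y)
    (hc : Injective fun K : Γ.ConnectedComponent => K.map (φ (c K))) {x y : α} :
    Δ.Adj (Hom.glue φ c x) (Hom.glue φ c y) ↔ Γ.Adj x y := by
  refine ⟨fun h => ?_, (Hom.glue φ c).map_adj⟩
  have hK : Γ.connectedComponentMk x = Γ.connectedComponentMk y :=
    hc (ConnectedComponent.connectedComponentMk_eq_of_adj h)
  simp only [Hom.glue, RelHom.coeFn_mk, hK] at h
  exact hφ _ x y (ConnectedComponent.exact hK) h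

def Embedding.glue (φ : ι → Γ →g Δ) (c : Γ.ConnectedComponent → ι)
    (hinj : ∀ i x y, Γ.Reachable x y → φ i x = φ i y → x = y)
    (hadj : ∀ i x y, Γ.Reachable x y → Δ.Adj (φ i x) (φ i y) → Γ.Adj x y)
    (hc : Injective fun K : Γ.ConnectedComponent => K.map (φ (c K))) : Γ ↪g Δ where
  toFun := Hom.glue φ c
  inj' := Hom.glue_injective hinj hc
  map_rel_iff' := Hom.glue_adj_iff hadj hc

end SimpleGraph

namespace CDC

open SimpleGraph

variable {V W : Type*} {G : SimpleGraph V} {H : SimpleGraph W}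

@[simp] theorem adj_iff {p q : V × Bool} : (CDC G).Adj p q ↔ p.2 ≠ q.2 ∧ G.Adj p.1 q.1 :=
  Iff.rfl

theorem exists_tfIso_iff_exists_iso_snd_eq :
    (∃ α β : V ≃ W, ∀ u v, G.Adj u v ↔ H.Adj (α u) (β v)) ↔
      ∃ g : CDC G ≃g CDC H, ∀ p, (g p).2 = p.2 := by
  constructor
  · rintro ⟨α, β, h⟩
    refine ⟨⟨Equiv.prodCongrLeft fun b => bif b then β else α, ?_⟩, fun _ => rfl⟩
    rintro ⟨u, _ | _⟩ ⟨v, _ | _⟩ <;> simp [h]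
    rw [H.adj_comm, ← h, ← h, G.adj_comm]
  · rintro ⟨g, hg⟩
    refine ⟨Equiv.fiberOfSndEq g hg false, Equiv.fiberOfSndEq g hg true, fun u v => ?_⟩
    have hadj := g.map_adj_iff (v := (u, false)) (w := (v, true))
    simp only [adj_iff, hg, ne_eq, Bool.false_eq_true, not_false_eq_true, true_and] at hadj
    exact hadj.symm

def twist (G : SimpleGraph V) (b : Bool) : CDC G ≃g CDC G where
  toFun p := (p.1, xor p.2 b)
  invFun p := (p.1, xor p.2 b)
  left_inv p := by simp
  right_inv p := by simp
  map_rel_iff' := by simp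

@[simp] theorem twist_apply (b : Bool) (p : V × Bool) : twist G b p = (p.1, xor p.2 b) := rfl

def recolor (φ : CDC G ≃g CDC H) : CDC G →g CDC H where
  toFun x := ((φ x).1, x.2)
  map_rel' h := ⟨h.1, (φ.map_adj_iff.2 h).2⟩

@[simp] theorem recolor_apply (φ : CDC G ≃g CDC H) (x : V × Bool) :
    recolor φ x = ((φ x).1, x.2) := rfl

def colorShift (φ : V × Bool → W × Bool) (x : V × Bool) : Bool := xor x.2 (φ x).2

theorem twist_colorShift_recolor (φ : CDC G ≃g CDC H) (x : V × Bool) :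
    twist H (colorShift φ x) (recolor φ x) = φ x := by
  simp [colorShift]

theorem colorShift_eq_of_reachable (φ : CDC G ≃g CDC H) {x y : V × Bool}
    (h : (CDC G).Reachable x y) : colorShift φ x = colorShift φ y := by
  refine h.eq_of_forall_adj fun x y hxy => ?_
  have hxor : ∀ a b c d : Bool, a ≠ b → c ≠ d → xor a c = xor b d := by decide
  exact hxor _ _ _ _ hxy.1 (φ.map_adj_iff.2 hxy).1

theorem colorShift_twist_trans (f : CDC G ≃g CDC H) (b : Bool) (x : V × Bool) :
    colorShift ((twist G b).trans f) x = xor b (colorShift f (twist G b x)) := by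
  obtain ⟨u, c⟩ := x
  cases b <;> cases c <;> simp [colorShift]

def componentColorShift (φ : CDC G ≃g CDC H) : (CDC G).ConnectedComponent → Bool :=
  ConnectedComponent.lift (colorShift φ) fun _ _ p _ => colorShift_eq_of_reachable φ p.reachable

@[simp] theorem componentColorShift_mk (φ : CDC G ≃g CDC H) (x : V × Bool) :
    componentColorShift φ ((CDC G).connectedComponentMk x) = colorShift φ x := rfl

theorem connectedComponentMk_eq_of_recolor {φ ψ : CDC G ≃g CDC H} {x y : V × Bool}
    (hxy : (CDC H).connectedComponentMk (recolor φ x) =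
      (CDC H).connectedComponentMk (recolor ψ y))
    (hs : colorShift φ x = colorShift ψ y) :
    (CDC H).connectedComponentMk (φ x) = (CDC H).connectedComponentMk (ψ y) := by
  rw [← twist_colorShift_recolor φ x, ← twist_colorShift_recolor ψ y, hs,
    ConnectedComponent.eq, Iso.reachable_iff, ← ConnectedComponent.eq, hxy]

theorem recolor_injective_of_reachable (φ : CDC G ≃g CDC H) {x y : V × Bool}
    (hxy : (CDC G).Reachable x y) (h : recolor φ x = recolor φ y) : x = y := by
  apply φ.injective
  rw [← twist_colorShift_recolor φ x, ← twist_colorShift_recolor φ y,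
    colorShift_eq_of_reachable φ hxy, h]

theorem adj_of_adj_recolor (φ : CDC G ≃g CDC H) {x y : V × Bool}
    (hxy : (CDC G).Reachable x y) (h : (CDC H).Adj (recolor φ x) (recolor φ y)) :
    (CDC G).Adj x y := by
  rw [← φ.map_adj_iff, ← twist_colorShift_recolor φ x, ← twist_colorShift_recolor φ y,
    colorShift_eq_of_reachable φ hxy]
  exact (twist H _).map_adj_iff.2 h

-- The recolored component and the shift determine the component of `f (twist G b x)`, hence
-- that of `twist G b x`; the color shift of `f` on it then determines `b`.
theorem injective_map_recolor_componentColorShift (f : CDC G ≃g CDC H) :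
    Injective fun p : (CDC G).ConnectedComponent × Bool =>
      (p.1.map (recolor ((twist G p.2).trans f)),
        componentColorShift ((twist G p.2).trans f) p.1) := by
  rintro ⟨K, b⟩ ⟨K', b'⟩ h
  induction K using ConnectedComponent.ind with | h x =>
  induction K' using ConnectedComponent.ind with | h y =>
  simp only [Prod.mk.injEq, ConnectedComponent.map_mk, componentColorShift_mk] at h
  obtain ⟨hmk, hs⟩ := h
  have hf := connectedComponentMk_eq_of_recolor hmk hs
  rw [ConnectedComponent.eq] at hf
  have hreach : (CDC G).Reachable (twist G b x) (twist G b' y) := Iso.reachable_iff.1 hf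
  rw [colorShift_twist_trans, colorShift_twist_trans, colorShift_eq_of_reachable f hreach] at hs
  obtain rfl : b = b' := Bool.xor_left_inj.1 hs
  simpa only [Prod.mk.injEq, and_true, ConnectedComponent.eq] using Iso.reachable_iff.1 hreach

theorem exists_iso_snd_eq [Finite V] (f : CDC G ≃g CDC H) :
    ∃ g : CDC G ≃g CDC H, ∀ p, (g p).2 = p.2 := by
  let φ : Bool → CDC G →g CDC H := fun b => recolor ((twist G b).trans f)
  obtain ⟨c, hc⟩ := exists_injective_choice_of_injective_prod (fun b K => K.map (φ b)) _
    (injective_map_recolor_componentColorShift f) fun _ _ => rfl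
  let e : CDC G ↪g CDC H := Embedding.glue φ c
    (fun _ _ _ => recolor_injective_of_reachable _) (fun _ _ _ => adj_of_adj_recolor _) hc
  exact ⟨RelIso.ofSurjective e (e.injective.surjective_of_finite f.toEquiv), fun _ => rfl⟩

end CDC

theorem stmt_2_general {V W : Type*} [Fintype V] (G : SimpleGraph V) (H : SimpleGraph W) :
    (∃ α β : V ≃ W, ∀ u v, G.Adj u v ↔ H.Adj (α u) (β v)) ↔
    Nonempty (CDC G ≃g CDC H) := by
  rw [CDC.exists_tfIso_iff_exists_iso_snd_eq]
  exact ⟨fun ⟨g, _⟩ => ⟨g⟩, fun ⟨f⟩ => CDC.exists_iso_snd_eq f⟩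

/-- Finite graphs `G` and `H` are TF-isomorphic iff their canonical
double covers are isomorphic (under an arbitrary isomorphism, not necessarily
colour-preserving). -/
theorem stmt_2 {V W : Type*} [Fintype V] [Fintype W] (G : SimpleGraph V) (H : SimpleGraph W) :
    (∃ α β : V ≃ W, ∀ u v, G.Adj u v ↔ H.Adj (α u) (β v)) ↔
    Nonempty (CDC G ≃g CDC H) :=
  stmt_2_general G H
end

section
/- Let H be a finite connected bipartite mixed graph with bipartition {X,Y} (every arc of H has its tail in one of X,Y and its head in the other). Then the number of isomorphism classes of finite mixed graphs G whose canonical double cover CDC(G) is isomorphic to H is equal to the number of conjugacy classes, under conjugation by the automorphism group Aut(H), of involutions θ ∈ Aut(H) which interchange the two colour classes, i.e. θ(X) = Y. -/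
/-!
An isomorphism `CDC(G) ≅ H` transports the layer swap `(u, i) ↦ (u, 1 - i)` of the double cover
to an involutive automorphism `θ` of `H`; the layers of `CDC(G)` form a bipartition of `H`, and
since a connected graph has only one bipartition, `θ` exchanges `X` and `Y`. Conversely, every
such `θ` arises this way, from the graph on `X` with an arc `u → v` whenever `u → θ v` in `H`.
Isomorphisms `G₁ ≅ G₂` correspond to automorphisms of `H` conjugating the two involutions:
an automorphism of the double cover commuting with the layer swap permutes the fibres
`{(u, 0), (u, 1)}`, and therefore descends to an isomorphism of the base graphs.
-/

/-- The canonical double cover of a mixed graph `G = (V, A)`: the mixed graph on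
`V × Bool` with an arc from `(u, i)` to `(v, j)` iff `i ≠ j` and `(u, v) ∈ A`. -/
def MixedCDC {V : Type*} (A : V → V → Prop) : (V × Bool) → (V × Bool) → Prop :=
  fun p q => p.2 ≠ q.2 ∧ A p.1 q.1

/-- The underlying simple graph of a mixed graph. -/
def UnderGraph {V : Type*} (A : V → V → Prop) : SimpleGraph V where
  Adj u v := u ≠ v ∧ (A u v ∨ A v u)
  symm := ⟨by intro u v h; exact ⟨h.1.symm, h.2.symm⟩⟩
  loopless := ⟨fun v h => h.1 rfl⟩

open Equiv

theorem Nat.card_quot_eq_of_maps {α β : Type*} {r : α → α → Prop} {s : β → β → Prop}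
    (f : α → β) (g : β → α) (hf : ∀ ⦃a b⦄, r a b → s (f a) (f b))
    (hg : ∀ ⦃a b⦄, s a b → r (g a) (g b)) (hgf : ∀ a, r (g (f a)) a) (hfg : ∀ b, s (f (g b)) b) :
    Nat.card (Quot r) = Nat.card (Quot s) :=
  Nat.card_congr
    { toFun := Quot.map f hf
      invFun := Quot.map g hg
      left_inv := Quot.ind fun a => Quot.sound (hgf a)
      right_inv := Quot.ind fun b => Quot.sound (hfg b) }

theorem SimpleGraph.Reachable.apply_eq_of_forall_adj {W α : Type*} {G : SimpleGraph W} {f : W → α}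
    (hf : ∀ u v, G.Adj u v → f u = f v) {u v : W} (h : G.Reachable u v) : f u = f v := by
  obtain ⟨p⟩ := h
  induction p with
  | nil => rfl
  | cons ha _ ih => exact (hf _ _ ha).trans ih

section DoubleCover

variable {V W : Type*}

def layerSwap (V : Type*) : Perm (V × Bool) := (Equiv.refl V).prodCongr boolNot

@[simp]
lemma layerSwap_apply (p : V × Bool) : layerSwap V p = (p.1, !p.2) := rfl

lemma mixedCDC_layerSwap (A : V → V → Prop) (p q : V × Bool) :
    MixedCDC A (layerSwap V p) (layerSwap V q) ↔ MixedCDC A p q := by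
  simp [MixedCDC]

lemma exists_fst_mixedCDC_iff (A : V → V → Prop) (u v : V) :
    (∃ p q : V × Bool, p.1 = u ∧ q.1 = v ∧ MixedCDC A p q) ↔ A u v :=
  ⟨fun ⟨_, _, hp, hq, h⟩ => hp ▸ hq ▸ h.2, fun h => ⟨(u, false), (v, true), rfl, rfl, by simp, h⟩⟩

lemma apply_eq_of_commute_layerSwap {h : Perm (V × Bool)} (hc : Commute h (layerSwap V))
    (u : V) (b : Bool) : h (u, b) = ((h (u, false)).1, b ^^ (h (u, false)).2) := by
  cases b
  · simp
  · simpa using DFunLike.congr_fun hc (u, false)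

lemma exists_fst_eq_of_commute_layerSwap {h : Perm (V × Bool)} (hc : Commute h (layerSwap V)) :
    ∃ f : V ≃ V, ∀ p, (h p).1 = f p.1 := by
  have hfst (p : V × Bool) : (h p).1 = (h (p.1, false)).1 := by
    rw [apply_eq_of_commute_layerSwap hc]
  refine ⟨Equiv.ofBijective (fun u => (h (u, false)).1) ⟨fun u u' huu' => ?_, fun v => ?_⟩, hfst⟩
  · have : h (u', (h (u, false)).2 ^^ (h (u', false)).2) = h (u, false) := by
      rw [apply_eq_of_commute_layerSwap hc]
      exact Prod.ext huu'.symm (by simp)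
    exact congrArg Prod.fst (h.injective this).symm
  · exact ⟨(h.symm (v, false)).1, by simp only [← hfst, apply_symm_apply]⟩

lemma iff_of_mixedCDC_iff_of_fst_eq {A₁ A₂ : V → V → Prop} (h : Perm (V × Bool))
    (hh : ∀ p q, MixedCDC A₁ p q ↔ MixedCDC A₂ (h p) (h q)) (f : V ≃ V)
    (hf : ∀ p, (h p).1 = f p.1) (u v : V) : A₁ u v ↔ A₂ (f u) (f v) := by
  rw [← exists_fst_mixedCDC_iff A₁, ← exists_fst_mixedCDC_iff A₂]
  have hfst (p : V × Bool) (w : V) : p.1 = w ↔ (h p).1 = f w := by rw [hf, f.apply_eq_iff_eq]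
  simp only [hfst _ u, hfst _ v, hh]
  exact ⟨fun ⟨p, q, hpq⟩ => ⟨h p, h q, hpq⟩,
    fun ⟨p, q, hpq⟩ => ⟨h.symm p, h.symm q, by simpa using hpq⟩⟩

def cdcInvolution (e : V × Bool ≃ W) : Perm W := e.permCongr (layerSwap V)

lemma cdcInvolution_eq_conj_iff_commute (e₁ e₂ : V × Bool ≃ W) (g : Perm W) :
    cdcInvolution e₂ = g * cdcInvolution e₁ * g⁻¹ ↔
      Commute ((e₁.trans g).trans e₂.symm : Perm (V × Bool)) (layerSwap V) := by
  simp only [Commute, SemiconjBy, Equiv.ext_iff, Perm.mul_apply, cdcInvolution, permCongr_apply]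
  rw [← (e₁.trans g).forall_congr_right]
  refine forall_congr' fun p => ?_
  simp only [trans_apply, Perm.coe_inv, symm_apply_apply]
  rw [eq_comm, ← e₂.symm_apply_eq]

theorem exists_iso_iff_exists_conj {A₁ A₂ : V → V → Prop} {B : W → W → Prop}
    {e₁ e₂ : V × Bool ≃ W} (he₁ : ∀ p q, MixedCDC A₁ p q ↔ B (e₁ p) (e₁ q))
    (he₂ : ∀ p q, MixedCDC A₂ p q ↔ B (e₂ p) (e₂ q)) :
    (∃ f : V ≃ V, ∀ u v, A₁ u v ↔ A₂ (f u) (f v)) ↔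
      ∃ g : Perm W, (∀ u v, B u v ↔ B (g u) (g v)) ∧
        cdcInvolution e₂ = g * cdcInvolution e₁ * g⁻¹ := by
  constructor
  · rintro ⟨f, hf⟩
    let F : Perm (V × Bool) := f.prodCongr (Equiv.refl Bool)
    refine ⟨(e₁.symm.trans F).trans e₂, fun u v => ?_, ?_⟩
    · have huv := he₁ (e₁.symm u) (e₁.symm v)
      rw [apply_symm_apply, apply_symm_apply] at huv
      simp only [trans_apply, ← huv, ← he₂]
      simp [F, MixedCDC, hf]
    · have hF : (e₁.trans ((e₁.symm.trans F).trans e₂)).trans e₂.symm = F := by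
        ext <;> simp
      rw [cdcInvolution_eq_conj_iff_commute, hF]
      exact Equiv.ext fun _ => rfl
  · rintro ⟨g, hg, hconj⟩
    let h : Perm (V × Bool) := (e₁.trans g).trans e₂.symm
    obtain ⟨f, hf⟩ :=
      exists_fst_eq_of_commute_layerSwap ((cdcInvolution_eq_conj_iff_commute e₁ e₂ g).1 hconj)
    refine ⟨f, iff_of_mixedCDC_iff_of_fst_eq h (fun p q => ?_) f hf⟩
    rw [he₁, hg, he₂]
    simp [h]

end DoubleCover

section Bipartition

variable {V W : Type*} {B : W → W → Prop}

def IsBipartition (B : W → W → Prop) (X : Set W) : Prop :=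
  ∀ u v, B u v → (u ∈ X ↔ v ∉ X)

theorem IsBipartition.eq_or_eq_compl {s t : Set W} (hconn : (UnderGraph B).Connected)
    (hs : IsBipartition B s) (ht : IsBipartition B t) : s = t ∨ s = tᶜ := by
  have hadj (u v : W) (huv : (UnderGraph B).Adj u v) : (u ∈ s ↔ u ∈ t) = (v ∈ s ↔ v ∈ t) := by
    rcases huv.2 with huv | hvu
    · have := hs u v huv; have := ht u v huv; apply propext; tauto
    · have := hs v u hvu; have := ht v u hvu; apply propext; tauto
  obtain ⟨w₀⟩ := hconn.nonempty
  have hconst (w : W) : (w ∈ s ↔ w ∈ t) = (w₀ ∈ s ↔ w₀ ∈ t) :=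
    ((hconn.preconnected w₀ w).apply_eq_of_forall_adj hadj).symm
  by_cases h₀ : w₀ ∈ s ↔ w₀ ∈ t
  · exact Or.inl (Set.ext fun w => hconst w ▸ h₀)
  · refine Or.inr (Set.ext fun w => ?_)
    have := hconst w ▸ h₀
    rw [Set.mem_compl_iff]
    tauto

lemma isBipartition_layer {A : V → V → Prop} {e : V × Bool ≃ W}
    (he : ∀ p q, MixedCDC A p q ↔ B (e p) (e q)) : IsBipartition B {w | (e.symm w).2 = false} := by
  intro u v huv
  have := ((he (e.symm u) (e.symm v)).2 (by simpa using huv)).1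
  change (e.symm u).2 = false ↔ ¬(e.symm v).2 = false
  revert this
  cases (e.symm u).2 <;> cases (e.symm v).2 <;> decide

end Bipartition

section Involution

variable {V W : Type*} {A : V → V → Prop} {B : W → W → Prop} {X : Set W}

def IsColourSwappingInvolution (B : W → W → Prop) (X : Set W) (θ : Perm W) : Prop :=
  (∀ u v, B u v ↔ B (θ u) (θ v)) ∧ θ * θ = 1 ∧ θ ≠ 1 ∧ (fun w => θ w) '' X = Xᶜ

lemma cdcInvolution_involutive (e : V × Bool ≃ W) : Function.Involutive (cdcInvolution e) :=
  fun _ => by simp [cdcInvolution]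

lemma cdcInvolution_rel_iff {e : V × Bool ≃ W} (he : ∀ p q, MixedCDC A p q ↔ B (e p) (e q))
    (u v : W) : B u v ↔ B (cdcInvolution e u) (cdcInvolution e v) := by
  rw [cdcInvolution, permCongr_apply, permCongr_apply, ← he, mixedCDC_layerSwap, he,
    apply_symm_apply, apply_symm_apply]

lemma cdcInvolution_apply_mem_iff {e : V × Bool ≃ W} (hconn : (UnderGraph B).Connected)
    (hX : IsBipartition B X) (he : ∀ p q, MixedCDC A p q ↔ B (e p) (e q)) (w : W) :
    cdcInvolution e w ∈ X ↔ w ∉ X := by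
  rcases hX.eq_or_eq_compl hconn (isBipartition_layer he) with rfl | rfl <;> simp [cdcInvolution]

theorem isColourSwappingInvolution_cdcInvolution {e : V × Bool ≃ W}
    (hconn : (UnderGraph B).Connected) (hX : IsBipartition B X)
    (he : ∀ p q, MixedCDC A p q ↔ B (e p) (e q)) :
    IsColourSwappingInvolution B X (cdcInvolution e) := by
  have hmem := cdcInvolution_apply_mem_iff hconn hX he
  refine ⟨cdcInvolution_rel_iff he, Equiv.ext (cdcInvolution_involutive e), fun h => ?_, ?_⟩
  · obtain ⟨w⟩ := hconn.nonempty
    simpa [h] using hmem w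
  · rw [(cdcInvolution_involutive e).image_eq_preimage_symm]
    exact Set.ext hmem

namespace IsColourSwappingInvolution

variable {θ : Perm W}

lemma involutive (hθ : IsColourSwappingInvolution B X θ) : Function.Involutive θ :=
  fun w => by simpa using DFunLike.congr_fun hθ.2.1 w

lemma mem_iff_apply_mem_compl (hθ : IsColourSwappingInvolution B X θ) (w : W) :
    w ∈ X ↔ θ w ∈ Xᶜ := by
  rw [← hθ.2.2.2, θ.injective.mem_set_image]

end IsColourSwappingInvolution

end Involution

section Construction

variable {W : Type*} {B : W → W → Prop} {X : Set W} [DecidablePred (· ∈ X)] {θ : Perm W}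

def cdcEquivOfSwap (θ : Perm W) (hθ : ∀ w, w ∈ X ↔ θ w ∈ Xᶜ) : X × Bool ≃ W :=
  (prodComm X Bool).trans <| (boolProdEquivSum X).trans <|
    (sumCongr (Equiv.refl X) (θ.subtypeEquiv hθ)).trans (Set.sumCompl X)

@[simp]
lemma cdcEquivOfSwap_apply_false (hθ : ∀ w, w ∈ X ↔ θ w ∈ Xᶜ) (u : X) :
    cdcEquivOfSwap θ hθ (u, false) = u := rfl

@[simp]
lemma cdcEquivOfSwap_apply_true (hθ : ∀ w, w ∈ X ↔ θ w ∈ Xᶜ) (u : X) :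
    cdcEquivOfSwap θ hθ (u, true) = θ u := rfl

lemma mixedCDC_iff_cdcEquivOfSwap (hθ : IsColourSwappingInvolution B X θ) (hX : IsBipartition B X)
    (p q : X × Bool) :
    MixedCDC (fun u v : X => B u (θ v)) p q ↔
      B (cdcEquivOfSwap θ hθ.mem_iff_apply_mem_compl p)
        (cdcEquivOfSwap θ hθ.mem_iff_apply_mem_compl q) := by
  obtain ⟨⟨u, hu⟩, _ | _⟩ := p <;> obtain ⟨⟨v, hv⟩, _ | _⟩ := q <;> simp [MixedCDC]
  · exact fun h => (hX u v h).1 hu hv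
  · rw [hθ.1, hθ.involutive]
  · rw [← hθ.1]
    exact fun h => (hX u v h).1 hu hv

lemma cdcInvolution_cdcEquivOfSwap (hθ : IsColourSwappingInvolution B X θ) :
    cdcInvolution (cdcEquivOfSwap θ hθ.mem_iff_apply_mem_compl) = θ := by
  refine Equiv.ext fun w => ?_
  obtain ⟨⟨u, _ | _⟩, rfl⟩ := (cdcEquivOfSwap θ hθ.mem_iff_apply_mem_compl).surjective w <;>
    simp only [cdcInvolution, permCongr_apply, symm_apply_apply, layerSwap_apply] <;>
    simp [hθ.involutive _]

end Construction

section Classification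

variable {W : Type*} {B : W → W → Prop} {X : Set W}

lemma exists_cdcIso_of_isColourSwappingInvolution {θ : Perm W}
    (hθ : IsColourSwappingInvolution B X θ) (hX : IsBipartition B X) :
    ∃ e : X × Bool ≃ W, ∀ p q, MixedCDC (fun u v : X => B u (θ v)) p q ↔ B (e p) (e q) := by
  classical
  exact ⟨_, mixedCDC_iff_cdcEquivOfSwap hθ hX⟩

lemma exists_iso_of_isColourSwappingInvolution {θ₁ θ₂ : Perm W}
    (hθ₁ : IsColourSwappingInvolution B X θ₁) (hθ₂ : IsColourSwappingInvolution B X θ₂)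
    (hX : IsBipartition B X)
    (h : ∃ g : Perm W, (∀ u v, B u v ↔ B (g u) (g v)) ∧ θ₂ = g * θ₁ * g⁻¹) :
    ∃ f : X ≃ X, ∀ u v : X, B u (θ₁ v) ↔ B (f u) (θ₂ (f v)) := by
  classical
  rwa [exists_iso_iff_exists_conj (mixedCDC_iff_cdcEquivOfSwap hθ₁ hX)
    (mixedCDC_iff_cdcEquivOfSwap hθ₂ hX), cdcInvolution_cdcEquivOfSwap hθ₁,
    cdcInvolution_cdcEquivOfSwap hθ₂]

lemma exists_iso_cdcInvolution {A : X → X → Prop} {e : X × Bool ≃ W}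
    (hconn : (UnderGraph B).Connected) (hX : IsBipartition B X)
    (he : ∀ p q, MixedCDC A p q ↔ B (e p) (e q)) :
    ∃ f : X ≃ X, ∀ u v : X, B u (cdcInvolution e v) ↔ A (f u) (f v) := by
  classical
  have hθ := isColourSwappingInvolution_cdcInvolution hconn hX he
  rw [exists_iso_iff_exists_conj (mixedCDC_iff_cdcEquivOfSwap hθ hX) he,
    cdcInvolution_cdcEquivOfSwap hθ]
  exact ⟨1, fun _ _ => Iff.rfl, by simp⟩

lemma exists_conj_cdcInvolution {θ : Perm W} {e : X × Bool ≃ W}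
    (hθ : IsColourSwappingInvolution B X θ) (hX : IsBipartition B X)
    (he : ∀ p q, MixedCDC (fun u v : X => B u (θ v)) p q ↔ B (e p) (e q)) :
    ∃ g : Perm W, (∀ u v, B u v ↔ B (g u) (g v)) ∧ θ = g * cdcInvolution e * g⁻¹ := by
  classical
  rw [← cdcInvolution_cdcEquivOfSwap hθ, ← exists_iso_iff_exists_conj he
    (mixedCDC_iff_cdcEquivOfSwap hθ hX)]
  exact ⟨Equiv.refl X, fun _ _ => Iff.rfl⟩

end Classification

theorem stmt_3_general {W : Type*} (B : W → W → Prop) (X Y : Set W)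
    (hpart_union : X ∪ Y = Set.univ) (hpart_disj : X ∩ Y = ∅)
    (harcs : ∀ u v, B u v → (u ∈ X ∧ v ∈ Y) ∨ (u ∈ Y ∧ v ∈ X))
    (hconn : (UnderGraph B).Connected) :
    Nat.card (Quot (fun (G₁ G₂ : {A : ↥X → ↥X → Prop //
          ∃ e : (↥X × Bool) ≃ W, ∀ p q, MixedCDC A p q ↔ B (e p) (e q)}) =>
        ∃ f : ↥X ≃ ↥X, ∀ u v, G₁.val u v ↔ G₂.val (f u) (f v))) =
    Nat.card (Quot (fun (θ₁ θ₂ : {θ : Equiv.Perm W //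
          (∀ u v, B u v ↔ B (θ u) (θ v)) ∧ θ * θ = 1 ∧ θ ≠ 1 ∧ (fun w => θ w) '' X = Y}) =>
        ∃ g : Equiv.Perm W, (∀ u v, B u v ↔ B (g u) (g v)) ∧ θ₂.val = g * θ₁.val * g⁻¹)) := by
  obtain rfl : Y = Xᶜ := (IsCompl.of_eq hpart_disj hpart_union).compl_eq.symm
  have hX : IsBipartition B X := fun u v huv => by
    rcases harcs u v huv with ⟨hu, hv⟩ | ⟨hu, hv⟩ <;> simp_all
  refine Nat.card_quot_eq_of_maps
    (fun G => ⟨cdcInvolution G.2.choose,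
      isColourSwappingInvolution_cdcInvolution hconn hX G.2.choose_spec⟩)
    (fun θ => ⟨fun u v => B u (θ.1 v), exists_cdcIso_of_isColourSwappingInvolution θ.2 hX⟩)
    ?_ ?_ ?_ ?_
  · exact fun G₁ G₂ => (exists_iso_iff_exists_conj G₁.2.choose_spec G₂.2.choose_spec).1
  · exact fun θ₁ θ₂ => exists_iso_of_isColourSwappingInvolution θ₁.2 θ₂.2 hX
  · exact fun G => exists_iso_cdcInvolution hconn hX G.2.choose_spec
  · exact fun θ => exists_conj_cdcInvolution θ.2 hX
      (exists_cdcIso_of_isColourSwappingInvolution θ.2 hX).choose_spec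

/-- for a finite connected bipartite mixed graph `H = (W, B)` with
bipartition `{X, Y}`, the number of isomorphism classes of finite mixed graphs `G`
with `CDC(G) ≅ H` (counted as isomorphism classes of mixed graphs on the vertex set
`X`, which has the forced cardinality) equals the number of `Aut(H)`-conjugacy
classes of involutions of `H` interchanging the two colour classes. -/
theorem stmt_3 {W : Type*} [Fintype W] (B : W → W → Prop) (X Y : Set W)
    (hpart_union : X ∪ Y = Set.univ) (hpart_disj : X ∩ Y = ∅)
    (harcs : ∀ u v, B u v → (u ∈ X ∧ v ∈ Y) ∨ (u ∈ Y ∧ v ∈ X))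
    (hconn : (UnderGraph B).Connected) :
    Nat.card (Quot (fun (G₁ G₂ : {A : ↥X → ↥X → Prop //
          ∃ e : (↥X × Bool) ≃ W, ∀ p q, MixedCDC A p q ↔ B (e p) (e q)}) =>
        ∃ f : ↥X ≃ ↥X, ∀ u v, G₁.val u v ↔ G₂.val (f u) (f v))) =
    Nat.card (Quot (fun (θ₁ θ₂ : {θ : Equiv.Perm W //
          (∀ u v, B u v ↔ B (θ u) (θ v)) ∧ θ * θ = 1 ∧ θ ≠ 1 ∧ (fun w => θ w) '' X = Y}) =>
        ∃ g : Equiv.Perm W, (∀ u v, B u v ↔ B (g u) (g v)) ∧ θ₂.val = g * θ₁.val * g⁻¹)) :=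
  stmt_3_general B X Y hpart_union hpart_disj harcs hconn
end

section
/- Every connected graph with at least two edges is A-connected: for every pair of distinct vertices u,v there is an A-trail (in the mixed graph whose arcs are the two orientations of each edge) joining u and v, i.e. an A-trail with vertex sequence v_0,…,v_k satisfying {v_0,v_k} = {u,v}. -/
/-- An A-trail (alternating trail) in the mixed graph `(V, A)`: a sequence of `k ≥ 1`
pairwise distinct arcs `a 0, …, a (k-1)` of `G` with a vertex sequence
`v 0, …, v k` such that the `i`-th arc is `(v i, v (i+1))` or `(v (i+1), v i)`,
and consecutive arcs alternate in direction. -/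
def IsATrail {V : Type*} (A : V → V → Prop) (k : ℕ) (a : ℕ → V × V) (v : ℕ → V) : Prop :=
  1 ≤ k ∧
  (∀ i, i < k → A (a i).1 (a i).2) ∧
  (∀ i, i < k → ∀ j, j < k → a i = a j → i = j) ∧
  (∀ i, i < k → a i = (v i, v (i + 1)) ∨ a i = (v (i + 1), v i)) ∧
  (∀ i, i + 1 < k → (a i = (v i, v (i + 1)) ↔ a (i + 1) = (v (i + 2), v (i + 1))))

lemma getVert_injOn' {V : Type*} {G : SimpleGraph V} {u v : V} (p : G.Walk u v)
    (hp : p.IsPath) : ∀ i ≤ p.length, ∀ j ≤ p.length, p.getVert i = p.getVert j → i = j := by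
  induction p with
  | nil => intro i hi j hj _; simp only [SimpleGraph.Walk.length_nil, Nat.le_zero] at hi hj; omega
  | @cons x y z h q ih =>
    rw [SimpleGraph.Walk.cons_isPath_iff] at hp
    intro i hi j hj hij
    match i, j with
    | 0, 0 => rfl
    | 0, j + 1 =>
      exfalso
      apply hp.2
      rw [SimpleGraph.Walk.mem_support_iff_exists_getVert]
      simp only [SimpleGraph.Walk.getVert_cons_succ, SimpleGraph.Walk.getVert_zero] at hij
      exact ⟨j, hij.symm, by simpa using hj⟩
    | i + 1, 0 =>
      exfalso
      apply hp.2
      rw [SimpleGraph.Walk.mem_support_iff_exists_getVert]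
      simp only [SimpleGraph.Walk.getVert_cons_succ, SimpleGraph.Walk.getVert_zero] at hij
      exact ⟨i, hij, by simpa using hi⟩
    | i + 1, j + 1 =>
      simp only [SimpleGraph.Walk.getVert_cons_succ] at hij
      have := ih hp.1 i (by simpa using hi) j (by simpa using hj) hij
      omega

/-- every connected graph with at least two edges is A-connected: any two
distinct vertices `u`, `v` are joined by an A-trail (in the mixed graph whose arcs are
the two orientations of each edge). -/
theorem stmt_6 {V : Type*} (G : SimpleGraph V) (hconn : G.Connected)
    (hedges : ∃ e₁ e₂ : Sym2 V, e₁ ∈ G.edgeSet ∧ e₂ ∈ G.edgeSet ∧ e₁ ≠ e₂)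
    (u v : V) (huv : u ≠ v) :
    ∃ (k : ℕ) (a : ℕ → V × V) (w : ℕ → V),
      IsATrail (fun x y => G.Adj x y) k a w ∧ w 0 = u ∧ w k = v := by
  classical
  obtain ⟨p0⟩ := hconn u v
  set p : G.Walk u v := (p0.toPath : G.Path u v).1 with hp_def
  have hpath : p.IsPath := p0.toPath.2
  set k := p.length with hk
  have hinj := getVert_injOn' p hpath
  set w : ℕ → V := fun i => p.getVert i with hw
  have hadj : ∀ i, i < k → G.Adj (w i) (w (i + 1)) := fun i hi => p.adj_getVert_succ hi
  have hne : ∀ i, i < k → w i ≠ w (i + 1) := fun i hi => (hadj i hi).ne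
  have hk1 : 1 ≤ k := by
    by_contra h
    have h0 : k = 0 := by omega
    apply huv
    have := p.getVert_length
    rw [← hk, h0] at this
    simpa using this
  refine ⟨k, fun i => if i % 2 = 0 then (w i, w (i + 1)) else (w (i + 1), w i), w, ?_, ?_, ?_⟩
  · refine ⟨hk1, ?_, ?_, ?_, ?_⟩
    · intro i hi
      by_cases h : i % 2 = 0 <;> simp [h, hadj i hi, (hadj i hi).symm]
    · intro i hi j hj hij
      have hi' : i + 1 ≤ k := hi
      have hj' : j + 1 ≤ k := hj
      by_cases h1 : i % 2 = 0 <;> by_cases h2 : j % 2 = 0 <;> simp [h1, h2, Prod.ext_iff] at hij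
      · exact hinj i (by omega) j (by omega) hij.1
      · have e1 := hinj i (by omega) (j+1) (by omega) hij.1
        have e2 := hinj (i+1) (by omega) j (by omega) hij.2
        omega
      · have e1 := hinj (i+1) (by omega) j (by omega) hij.1
        have e2 := hinj i (by omega) (j+1) (by omega) hij.2
        omega
      · exact hinj i (by omega) j (by omega) hij.2
    · intro i hi
      by_cases h : i % 2 = 0 <;> simp [h]
    · intro i hi
      have hne1 := hne i (by omega)
      have hne2 := hne (i+1) (by omega)
      by_cases h : i % 2 = 0
      · have h2 : ¬ (i + 1) % 2 = 0 := by omega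
        simp [h, h2]
      · have h2 : (i + 1) % 2 = 0 := by omega
        simp only [h, if_neg, h2, if_pos, if_true]
        constructor
        · intro hc
          exfalso
          apply hne1
          have := congrArg Prod.fst hc
          simpa using this.symm
        · intro hc
          exfalso
          apply hne2
          have := congrArg Prod.fst hc
          simpa using this
  · simp [hw]
  · simp [hw, hk]
end

section
/- For any mixed graph G, the relation R on the arc set A(G), defined by x R y if and only if there exists an A-trail of G whose first arc is x and whose last arc is y, is an equivalence relation. -/
namespace ATrailAux

variable {V : Type*} {A : V → V → Prop}

lemma prefix_trail {k : ℕ} {a : ℕ → V × V} {v : ℕ → V}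
    (h : IsATrail A k a v) {t : ℕ} (h1 : 1 ≤ t) (h2 : t ≤ k) : IsATrail A t a v := by
  obtain ⟨hk, hA, hinj, hend, halt⟩ := h
  exact ⟨h1, fun i hi => hA i (by omega), fun i hi j hj => hinj i (by omega) j (by omega),
    fun i hi => hend i (by omega), fun i hi => halt i (by omega)⟩

lemma suffix_trail {k : ℕ} {a : ℕ → V × V} {v : ℕ → V}
    (h : IsATrail A k a v) {j : ℕ} (hj : j < k) :
    IsATrail A (k - j) (fun s => a (j + s)) (fun s => v (j + s)) := by
  obtain ⟨hk, hA, hinj, hend, halt⟩ := h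
  refine ⟨by omega, fun i hi => hA (j + i) (by omega),
    fun i hi i' hi' he => by have := hinj (j + i) (by omega) (j + i') (by omega) he; omega,
    fun i hi => ?_, fun i hi => ?_⟩
  · dsimp only
    have e1 : j + (i + 1) = (j + i) + 1 := by omega
    rw [e1]
    exact hend (j + i) (by omega)
  · dsimp only
    have e1 : j + (i + 1) = (j + i) + 1 := by omega
    have e2 : j + (i + 2) = (j + i) + 2 := by omega
    rw [e1, e2]
    exact halt (j + i) (by omega)

lemma reverse_trail {k : ℕ} {a : ℕ → V × V} {v : ℕ → V} (h : IsATrail A k a v) :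
    IsATrail A k (fun i => a (k - 1 - i)) (fun i => v (k - i)) := by
  obtain ⟨hk, hA, hinj, hend, halt⟩ := h
  refine ⟨hk, fun i hi => hA (k - 1 - i) (by omega),
    fun i hi i' hi' he => by have := hinj (k - 1 - i) (by omega) (k - 1 - i') (by omega) he; omega,
    fun i hi => ?_, fun i hi => ?_⟩
  · dsimp only
    have e1 : k - i = (k - 1 - i) + 1 := by omega
    rw [e1]
    have e2 : k - (i + 1) = k - 1 - i := by omega
    rw [e2]
    exact (hend (k - 1 - i) (by omega)).symm
  · -- alternation for reversed trail
    dsimp only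
    set p := k - 1 - (i + 1) with hp
    have hp1 : k - 1 - i = p + 1 := by omega
    have e1 : k - i = p + 2 := by omega
    have e2 : k - (i + 1) = p + 1 := by omega
    have e3 : k - (i + 2) = p := by omega
    rw [hp1, e1, e2, e3]
    exact (halt p (by omega)).symm

lemma fwd_iff {p : V × V} {x y : V} (h : p = (x, y) ∨ p = (y, x)) :
    p = (x, y) ↔ p.2 = y := by
  rcases h with rfl | rfl
  · simp
  · constructor
    · intro h'
      rw [h']
    · intro h'
      simp only at h'
      subst h'
      rfl

end ATrailAux

/-- for any mixed graph `G = (V, A)`, the relation `R` on the arc set,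
defined by `x R y` iff some A-trail of `G` has first arc `x` and last arc `y`, is an
equivalence relation. -/
theorem stmt_8 {V : Type*} (A : V → V → Prop) :
    Equivalence (fun x y : {p : V × V // A p.1 p.2} =>
      ∃ k a v, IsATrail A k a v ∧ a 0 = x.val ∧ a (k - 1) = y.val) := by
  classical
  constructor
  · -- reflexivity
    intro x
    refine ⟨1, fun _ => x.val, fun n => if n = 0 then x.val.1 else x.val.2,
      ⟨le_refl 1, fun i _ => x.property, fun i hi j hj _ => by omega,
        fun i hi => Or.inl ?_, fun i hi => absurd hi (by omega)⟩, rfl, rfl⟩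
    have : i = 0 := by omega
    subst this
    simp
  · -- symmetry
    rintro x y ⟨k, a, v, ht, hx, hy⟩
    refine ⟨k, fun i => a (k - 1 - i), fun i => v (k - i), ATrailAux.reverse_trail ht, ?_, ?_⟩
    · simpa using hy
    · have e : k - 1 - (k - 1) = 0 := by omega
      simpa [e] using hx
  · -- transitivity
    rintro x y z ⟨k, a, v, ht1, hx, hy⟩ ⟨m, b, w, ht2, hy', hz⟩
    obtain ⟨hk, hA, hinj, hend, halt⟩ := ht1
    obtain ⟨hm, hB, hbinj, hbend, hbalt⟩ := ht2
    have key : ∃ j, (j < m ∧ ∃ i, i < k ∧ a i = b j) ∧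
        ∀ j', (j' < m ∧ ∃ i, i < k ∧ a i = b j') → j' ≤ j := by
      have hP0 : 0 < m ∧ ∃ i, i < k ∧ a i = b 0 := ⟨hm, k - 1, by omega, by rw [hy, hy']⟩
      refine ⟨Nat.findGreatest (fun j => j < m ∧ ∃ i, i < k ∧ a i = b j) m,
        Nat.findGreatest_spec (P := fun j => j < m ∧ ∃ i, i < k ∧ a i = b j)
          (Nat.zero_le m) hP0, ?_⟩
      intro j' hj'
      by_contra hlt
      exact Nat.findGreatest_is_greatest (P := fun j => j < m ∧ ∃ i, i < k ∧ a i = b j)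
        (by omega) hj'.1.le hj'
    obtain ⟨j, ⟨hjm, i, hi, hab⟩, hjmax⟩ := key
    by_cases hjlast : j = m - 1
    · -- last arc of T2 already lies on T1: take a prefix of T1
      refine ⟨i + 1, a, v,
        ATrailAux.prefix_trail ⟨hk, hA, hinj, hend, halt⟩ (by omega) (by omega), hx, ?_⟩
      show a i = z.val
      rw [hab, hjlast, hz]
    · have hj1 : j + 1 < m := by omega
      by_cases hAcase : v (i + 1) = w (j + 1)
      · -- splice prefix of T1 (through arc i) with suffix of T2 (from arc j+1)
        set K := i + 1 + (m - 1 - j) with hK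
        set c : ℕ → V × V := fun t => if t < i + 1 then a t else b (t - i + j) with hc
        set u : ℕ → V := fun t => if t < i + 1 then v t else w (t - i + j) with hu
        have hc1 : ∀ t, t ≤ i → c t = a t := fun t ht => if_pos (by omega)
        have hc2 : ∀ t, i + 1 ≤ t → c t = b (t - i + j) := fun t ht => if_neg (by omega)
        have hu2 : ∀ t, t ≤ i + 1 → u t = v t := by
          intro t ht
          rcases Nat.lt_or_ge t (i + 1) with h | h
          · exact if_pos h
          · have : t = i + 1 := by omega
            subst this
            show (if i + 1 < i + 1 then v (i + 1) else w (i + 1 - i + j)) = v (i + 1)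
            rw [if_neg (by omega)]
            have : i + 1 - i + j = j + 1 := by omega
            rw [this, ← hAcase]
        have hu3 : ∀ t, i + 1 ≤ t → u t = w (t - i + j) := fun t ht => if_neg (by omega)
        refine ⟨K, c, u, ⟨by omega, ?_, ?_, ?_, ?_⟩, ?_, ?_⟩
        · intro t htK
          rcases Nat.lt_or_ge t (i + 1) with h | h
          · rw [hc1 t (by omega)]; exact hA t (by omega)
          · rw [hc2 t h]; exact hB (t - i + j) (by omega)
        · intro t htK t' htK' he
          rcases Nat.lt_or_ge t (i + 1) with h | h <;> rcases Nat.lt_or_ge t' (i + 1) with h' | h'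
          · rw [hc1 t (by omega), hc1 t' (by omega)] at he
            exact hinj t (by omega) t' (by omega) he
          · rw [hc1 t (by omega), hc2 t' h'] at he
            have := hjmax (t' - i + j) ⟨by omega, t, by omega, he⟩
            omega
          · rw [hc2 t h, hc1 t' (by omega)] at he
            have := hjmax (t - i + j) ⟨by omega, t', by omega, he.symm⟩
            omega
          · rw [hc2 t h, hc2 t' h'] at he
            have := hbinj (t - i + j) (by omega) (t' - i + j) (by omega) he
            omega
        · intro t htK
          rcases Nat.lt_or_ge t (i + 1) with h | h
          · rw [hc1 t (by omega), hu2 t (by omega), hu2 (t + 1) (by omega)]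
            exact hend t (by omega)
          · rw [hc2 t h, hu3 t h, hu3 (t + 1) (by omega)]
            have e1 : t + 1 - i + j = (t - i + j) + 1 := by omega
            rw [e1]
            exact hbend (t - i + j) (by omega)
        · intro t htK
          rcases Nat.lt_or_ge (t + 1) (i + 1) with h | h
          · -- wholly inside the prefix
            rw [hc1 t (by omega), hc1 (t + 1) (by omega), hu2 t (by omega),
              hu2 (t + 1) (by omega), hu2 (t + 2) (by omega)]
            exact halt t (by omega)
          · rcases Nat.lt_or_ge t (i + 1) with h' | h'
            · -- junction: t = i
              have hti : t = i := by omega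
              subst hti
              rw [hc1 t le_rfl, hc2 (t + 1) (by omega), hu2 t (by omega),
                hu2 (t + 1) le_rfl, hu3 (t + 2) (by omega)]
              have e1 : t + 1 - t + j = j + 1 := by omega
              have e2 : t + 2 - t + j = j + 2 := by omega
              rw [e1, e2]
              have eA : a t = (v t, v (t + 1)) ↔ (a t).2 = v (t + 1) :=
                ATrailAux.fwd_iff (hend t (by omega))
              have eB : b j = (w j, w (j + 1)) ↔ (b j).2 = w (j + 1) :=
                ATrailAux.fwd_iff (hbend j (by omega))
              rw [eA, hab, hAcase, ← eB, hbalt j hj1]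
            · -- wholly inside the suffix
              rw [hc2 t h', hc2 (t + 1) (by omega), hu3 t h', hu3 (t + 1) (by omega),
                hu3 (t + 2) (by omega)]
              have e1 : t + 1 - i + j = (t - i + j) + 1 := by omega
              have e2 : t + 2 - i + j = (t - i + j) + 2 := by omega
              rw [e1, e2]
              exact hbalt (t - i + j) (by omega)
        · rw [hc1 0 (by omega)]; exact hx
        · have hK1 : i + 1 ≤ K - 1 := by omega
          rw [hc2 (K - 1) hK1]
          have : K - 1 - i + j = m - 1 := by omega
          rw [this]; exact hz
      · -- orientations clash at the common arc: drop arc i instead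
        have hvB : v i = w (j + 1) ∧ v (i + 1) = w j := by
          rcases hend i hi with h1 | h1 <;> rcases hbend j hjm with h2 | h2 <;>
            rw [h1] at hab <;> rw [h2] at hab <;>
            simp only [Prod.mk.injEq] at hab
          · exact absurd hab.2 hAcase
          · exact ⟨hab.1, hab.2⟩
          · exact ⟨hab.2, hab.1⟩
          · exact absurd hab.1 hAcase
        obtain ⟨hvB1, hvB2⟩ := hvB
        rcases Nat.eq_zero_or_pos i with hi0 | hipos
        · -- i = 0: the suffix of T2 from arc j already works
          subst hi0
          refine ⟨m - j, fun s => b (j + s), fun s => w (j + s),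
            ATrailAux.suffix_trail ⟨hm, hB, hbinj, hbend, hbalt⟩ hjm, ?_, ?_⟩
          · show b j = x.val
            rw [← hab, hx]
          · show b (j + (m - j - 1)) = z.val
            have e : j + (m - j - 1) = m - 1 := by omega
            rw [e, hz]
        · -- i ≥ 1: splice prefix of T1 (before arc i) with suffix of T2 (from arc j+1)
          obtain ⟨i', rfl⟩ : ∃ i', i = i' + 1 := ⟨i - 1, by omega⟩
          set K := i' + 1 + (m - 1 - j) with hK
          set c : ℕ → V × V := fun t => if t < i' + 1 then a t else b (t - i' + j) with hc
          set u : ℕ → V := fun t => if t < i' + 1 then v t else w (t - i' + j) with hu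
          have hc1 : ∀ t, t ≤ i' → c t = a t := fun t ht => if_pos (by omega)
          have hc2 : ∀ t, i' + 1 ≤ t → c t = b (t - i' + j) := fun t ht => if_neg (by omega)
          have hu2 : ∀ t, t ≤ i' + 1 → u t = v t := by
            intro t ht
            rcases Nat.lt_or_ge t (i' + 1) with h | h
            · exact if_pos h
            · have : t = i' + 1 := by omega
              subst this
              show (if i' + 1 < i' + 1 then v (i' + 1) else w (i' + 1 - i' + j)) = v (i' + 1)
              rw [if_neg (by omega)]
              have : i' + 1 - i' + j = j + 1 := by omega
              rw [this, ← hvB1]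
          have hu3 : ∀ t, i' + 1 ≤ t → u t = w (t - i' + j) := fun t ht => if_neg (by omega)
          refine ⟨K, c, u, ⟨by omega, ?_, ?_, ?_, ?_⟩, ?_, ?_⟩
          · intro t htK
            rcases Nat.lt_or_ge t (i' + 1) with h | h
            · rw [hc1 t (by omega)]; exact hA t (by omega)
            · rw [hc2 t h]; exact hB (t - i' + j) (by omega)
          · intro t htK t' htK' he
            rcases Nat.lt_or_ge t (i' + 1) with h | h <;>
              rcases Nat.lt_or_ge t' (i' + 1) with h' | h'
            · rw [hc1 t (by omega), hc1 t' (by omega)] at he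
              exact hinj t (by omega) t' (by omega) he
            · rw [hc1 t (by omega), hc2 t' h'] at he
              have := hjmax (t' - i' + j) ⟨by omega, t, by omega, he⟩
              omega
            · rw [hc2 t h, hc1 t' (by omega)] at he
              have := hjmax (t - i' + j) ⟨by omega, t', by omega, he.symm⟩
              omega
            · rw [hc2 t h, hc2 t' h'] at he
              have := hbinj (t - i' + j) (by omega) (t' - i' + j) (by omega) he
              omega
          · intro t htK
            rcases Nat.lt_or_ge t (i' + 1) with h | h
            · rw [hc1 t (by omega), hu2 t (by omega), hu2 (t + 1) (by omega)]
              exact hend t (by omega)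
            · rw [hc2 t h, hu3 t h, hu3 (t + 1) (by omega)]
              have e1 : t + 1 - i' + j = (t - i' + j) + 1 := by omega
              rw [e1]
              exact hbend (t - i' + j) (by omega)
          · intro t htK
            rcases Nat.lt_or_ge (t + 1) (i' + 1) with h | h
            · rw [hc1 t (by omega), hc1 (t + 1) (by omega), hu2 t (by omega),
                hu2 (t + 1) (by omega), hu2 (t + 2) (by omega)]
              exact halt t (by omega)
            · rcases Nat.lt_or_ge t (i' + 1) with h' | h'
              · -- junction: t = i'
                have hti : t = i' := by omega
                subst hti
                rw [hc1 t le_rfl, hc2 (t + 1) (by omega), hu2 t (by omega),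
                  hu2 (t + 1) le_rfl, hu3 (t + 2) (by omega)]
                have e1 : t + 1 - t + j = j + 1 := by omega
                have e2 : t + 2 - t + j = j + 2 := by omega
                rw [e1, e2]
                have h1 := halt t (by omega)
                have hvB2' : v (t + 2) = w j := hvB2
                rw [hab, hvB1, hvB2'] at h1
                rw [hvB1]
                exact h1.trans (hbalt j hj1)
              · rw [hc2 t h', hc2 (t + 1) (by omega), hu3 t h', hu3 (t + 1) (by omega),
                  hu3 (t + 2) (by omega)]
                have e1 : t + 1 - i' + j = (t - i' + j) + 1 := by omega
                have e2 : t + 2 - i' + j = (t - i' + j) + 2 := by omega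
                rw [e1, e2]
                exact hbalt (t - i' + j) (by omega)
          · rw [hc1 0 (by omega)]; exact hx
          · have hK1 : i' + 1 ≤ K - 1 := by omega
            rw [hc2 (K - 1) hK1]
            have : K - 1 - i' + j = m - 1 := by omega
            rw [this]; exact hz
end

section
/- Let G be a connected graph with at least one edge. Then the equivalence relation R on the arc set of G has exactly one equivalence class if G is not bipartite, and exactly two equivalence classes if G is bipartite. -/
/-- The relation `R` on arcs: `x R y` iff some A-trail has first arc `x` and last arc `y`. -/
def ATrailRel {V : Type*} (A : V → V → Prop) (x y : V × V) : Prop :=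
  ∃ k a v, IsATrail A k a v ∧ a 0 = x ∧ a (k - 1) = y

/-- A frontier vertex: a vertex incident with two arcs lying in different classes of
the equivalence relation `ATrailRel`. -/
def IsFrontier {V : Type*} (A : V → V → Prop) (w : V) : Prop :=
  ∃ x y : V × V, A x.1 x.2 ∧ A y.1 y.2 ∧ (x.1 = w ∨ x.2 = w) ∧ (y.1 = w ∨ y.2 = w) ∧
    ¬ ATrailRel A x y

section ATrail

variable {V : Type*} {A : V → V → Prop}

theorem aTrailRel_of_two {x y : V × V} (v₀ v₁ v₂ : V) (hx : A x.1 x.2) (hy : A y.1 y.2)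
    (hxy : x ≠ y) (hxv : x = (v₀, v₁) ∨ x = (v₁, v₀)) (hyv : y = (v₁, v₂) ∨ y = (v₂, v₁))
    (halt : x = (v₀, v₁) ↔ y = (v₂, v₁)) : ATrailRel A x y := by
  refine ⟨2, fun i => if i = 0 then x else y,
    fun i => if i = 0 then v₀ else if i = 1 then v₁ else v₂, ⟨one_le_two, ?_, ?_, ?_, ?_⟩, rfl, rfl⟩
  · intro i _
    dsimp only
    split_ifs <;> assumption
  · intro i hi j hj hij
    dsimp only at hij
    split_ifs at hij <;> first | omega | exact absurd hij hxy | exact absurd hij.symm hxy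
  · intro i hi
    obtain rfl | rfl : i = 0 ∨ i = 1 := by omega
    · simpa using hxv
    · simpa using hyv
  · intro i hi
    obtain rfl : i = 0 := by omega
    simpa using halt

theorem aTrailRel_of_snd_eq {x y : V × V} (hx : A x.1 x.2) (hy : A y.1 y.2) (hxy : x ≠ y)
    (h : x.2 = y.2) : ATrailRel A x y := by
  obtain ⟨u, v⟩ := x
  obtain ⟨w, _⟩ := y
  subst h
  exact aTrailRel_of_two u v w hx hy hxy (.inl rfl) (.inr rfl) (by simp)

theorem aTrailRel_of_fst_eq {x y : V × V} (hx : A x.1 x.2) (hy : A y.1 y.2) (hxy : x ≠ y)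
    (hx' : x.1 ≠ x.2) (hy' : y.1 ≠ y.2) (h : x.1 = y.1) : ATrailRel A x y := by
  obtain ⟨u, v⟩ := x
  obtain ⟨_, w⟩ := y
  subst h
  refine aTrailRel_of_two v u w hx hy hxy (.inr rfl) (.inl rfl) ?_
  simp_all [eq_comm]

theorem IsATrail.color_fst_succ {k : ℕ} {a : ℕ → V × V} {v : ℕ → V} (h : IsATrail A k a v)
    {C : V → Bool} (hC : ∀ u w, A u w → C u ≠ C w) {i : ℕ} (hi : i + 1 < k) :
    C (a (i + 1)).1 = C (a i).1 := by
  obtain ⟨-, hA, -, hend, halt⟩ := h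
  have hAi := hA i (by omega)
  have hAi' := hA (i + 1) hi
  rcases hend i (by omega) with hfwd | hbwd
  · have hnext := (halt i hi).1 hfwd
    rw [hfwd] at hAi ⊢
    rw [hnext] at hAi' ⊢
    have h₁ := hC _ _ hAi
    have h₂ := hC _ _ hAi'
    revert h₁ h₂
    cases C (v i) <;> cases C (v (i + 1)) <;> cases C (v (i + 2)) <;> decide
  · have hloop : v i ≠ v (i + 1) := fun he => hC _ _ (hbwd ▸ hAi) (by rw [he])
    have hnext : a (i + 1) = (v (i + 1), v (i + 2)) := by
      refine (hend (i + 1) hi).resolve_right fun he => hloop ?_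
      exact (Prod.ext_iff.1 (hbwd ▸ (halt i hi).2 he)).2
    rw [hbwd, hnext]

theorem IsATrail.color_fst_eq {k : ℕ} {a : ℕ → V × V} {v : ℕ → V} (h : IsATrail A k a v)
    {C : V → Bool} (hC : ∀ u w, A u w → C u ≠ C w) : ∀ i < k, C (a i).1 = C (a 0).1
  | 0, _ => rfl
  | i + 1, hi => (h.color_fst_succ hC hi).trans (h.color_fst_eq hC i (by omega))

theorem ATrailRel.color_fst_eq {x y : V × V} (h : ATrailRel A x y)
    {C : V → Bool} (hC : ∀ u w, A u w → C u ≠ C w) : C x.1 = C y.1 := by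
  obtain ⟨k, a, v, ht, rfl, rfl⟩ := h
  exact (ht.color_fst_eq hC (k - 1) (by have := ht.1; omega)).symm

end ATrail

namespace SimpleGraph

variable {V : Type*} {G : SimpleGraph V}

variable (G) in
def arcRel (x y : {p : V × V // G.Adj p.1 p.2}) : Prop :=
  ATrailRel G.Adj x.val y.val

def arcEnd (s : Bool) (x : V × V) : V := if s then x.1 else x.2

theorem arcClass_eq_of_arcEnd_eq {x y : {p : V × V // G.Adj p.1 p.2}} (s : Bool)
    (h : arcEnd s x.val = arcEnd s y.val) : Quot.mk G.arcRel x = Quot.mk G.arcRel y := by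
  rcases eq_or_ne x y with rfl | hxy
  · rfl
  apply Quot.sound
  have hxy' : x.val ≠ y.val := Subtype.val_injective.ne hxy
  cases s
  · exact aTrailRel_of_snd_eq x.2 y.2 hxy' h
  · exact aTrailRel_of_fst_eq x.2 y.2 hxy' x.2.ne y.2.ne h

/-- Crossing an edge `b b'` switches between the arcs leaving `b` and those entering `b'`
(both contain an orientation of `b b'`), and between the arcs entering `b` and those
leaving `b'`. -/
theorem arcClass_eq_of_walk {b c : V} (p : G.Walk b c) (s : Bool)
    {x y : {p : V × V // G.Adj p.1 p.2}} (hx : arcEnd s x.val = b)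
    (hy : arcEnd (s ^^ decide (Odd p.length)) y.val = c) :
    Quot.mk G.arcRel x = Quot.mk G.arcRel y := by
  induction p generalizing s x with
  | nil => exact arcClass_eq_of_arcEnd_eq s (hx.trans (by simpa using hy.symm))
  | @cons b b' c h q ih =>
    let z : {p : V × V // G.Adj p.1 p.2} := if s then ⟨(b, b'), h⟩ else ⟨(b', b), h.symm⟩
    have hz : arcEnd s z.val = b := by cases s <;> rfl
    have hz' : arcEnd (!s) z.val = b' := by cases s <;> rfl
    refine (arcClass_eq_of_arcEnd_eq s (hx.trans hz.symm)).trans (ih (!s) hz' ?_)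
    simpa only [Walk.length_cons, Nat.odd_add_one, decide_not, Bool.xor_not, Bool.not_xor] using hy

theorem arcClass_eq_of_odd_walk {x y : {p : V × V // G.Adj p.1 p.2}}
    (p : G.Walk x.val.2 y.val.1) (hp : Odd p.length) : Quot.mk G.arcRel x = Quot.mk G.arcRel y :=
  arcClass_eq_of_walk p false rfl (by simp [hp, arcEnd])

theorem Preconnected.exists_odd_walk (hconn : G.Preconnected) (hG : ¬ G.Colorable 2) (b c : V) :
    ∃ p : G.Walk b c, Odd p.length := by
  obtain ⟨u, w, hw⟩ : ∃ u, ∃ w : G.Walk u u, Odd w.length := by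
    simpa [two_colorable_iff_forall_loop_even] using hG
  obtain ⟨p⟩ := hconn b u
  obtain ⟨q⟩ := hconn u c
  by_cases hpq : Odd (p.append q).length
  · exact ⟨_, hpq⟩
  · refine ⟨p.append (w.append q), ?_⟩
    rw [Walk.length_append, Nat.not_odd_iff_even] at hpq
    convert hpq.add_odd hw using 1
    simp only [Walk.length_append]
    ring

theorem Preconnected.card_arcClass_of_not_colorable (hconn : G.Preconnected)
    (hG : ¬ G.Colorable 2) (x₀ : {p : V × V // G.Adj p.1 p.2}) :
    Nat.card (Quot G.arcRel) = 1 := by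
  have : Nonempty (Quot G.arcRel) := ⟨Quot.mk _ x₀⟩
  have : Subsingleton (Quot G.arcRel) := ⟨by
    rintro ⟨x⟩ ⟨y⟩
    obtain ⟨p, hp⟩ := hconn.exists_odd_walk hG x.val.2 y.val.1
    exact arcClass_eq_of_odd_walk p hp⟩
  exact Nat.card_unique

def Coloring.arcClassColor (c : G.Coloring Bool) : Quot G.arcRel → Bool :=
  Quot.lift (fun x => c x.val.1) fun _ _ h => h.color_fst_eq fun _ _ => c.valid

theorem Preconnected.arcClassColor_injective (hconn : G.Preconnected) (c : G.Coloring Bool) :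
    Function.Injective c.arcClassColor := by
  rintro ⟨x⟩ ⟨y⟩ hxy
  change c x.val.1 = c y.val.1 at hxy
  obtain ⟨p⟩ := hconn x.val.2 y.val.1
  refine arcClass_eq_of_odd_walk p ((c.odd_length_iff_not_congr p).2 ?_)
  have := c.valid x.2
  revert this hxy
  cases c x.val.1 <;> cases c x.val.2 <;> cases c y.val.1 <;> simp

theorem Coloring.arcClassColor_surjective (c : G.Coloring Bool)
    (x₀ : {p : V × V // G.Adj p.1 p.2}) : Function.Surjective c.arcClassColor := by
  intro b
  by_cases hb : c x₀.val.1 = b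
  · exact ⟨Quot.mk _ x₀, hb⟩
  · refine ⟨Quot.mk _ ⟨x₀.val.swap, x₀.2.symm⟩, ?_⟩
    change c x₀.val.2 = b
    have := c.valid x₀.2
    revert this hb
    cases c x₀.val.1 <;> cases c x₀.val.2 <;> cases b <;> simp

theorem Preconnected.card_arcClass_of_coloring (hconn : G.Preconnected) (c : G.Coloring Bool)
    (x₀ : {p : V × V // G.Adj p.1 p.2}) : Nat.card (Quot G.arcRel) = 2 :=
  (Nat.card_eq_of_bijective _
    ⟨hconn.arcClassColor_injective c, c.arcClassColor_surjective x₀⟩).trans (by simp)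

end SimpleGraph

/-- for a connected graph `G` with at least one edge, the equivalence
relation `R` on the arc set has exactly one class if `G` is not bipartite and exactly
two classes if `G` is bipartite. -/
theorem stmt_9 {V : Type*} (G : SimpleGraph V) (hconn : G.Connected)
    (hedge : ∃ u v, G.Adj u v) :
    (¬ (∃ C : V → Bool, ∀ u v, G.Adj u v → C u ≠ C v) →
      Nat.card (Quot (fun x y : {p : V × V // G.Adj p.1 p.2} =>
        ATrailRel (fun s t => G.Adj s t) x.val y.val)) = 1) ∧
    ((∃ C : V → Bool, ∀ u v, G.Adj u v → C u ≠ C v) →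
      Nat.card (Quot (fun x y : {p : V × V // G.Adj p.1 p.2} =>
        ATrailRel (fun s t => G.Adj s t) x.val y.val)) = 2) := by
  obtain ⟨u₀, v₀, h₀⟩ := hedge
  let x₀ : {p : V × V // G.Adj p.1 p.2} := ⟨(u₀, v₀), h₀⟩
  refine ⟨fun hG => hconn.preconnected.card_arcClass_of_not_colorable ?_ x₀,
    fun ⟨C, hC⟩ => hconn.preconnected.card_arcClass_of_coloring (.mk C (hC _ _)) x₀⟩
  rintro ⟨c⟩
  exact hG ⟨finTwoEquiv ∘ c, fun _ _ h => finTwoEquiv.injective.ne (c.valid h)⟩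
end

section
/- Let G be a connected mixed graph with at least one arc. Then the relation R on A(G) has exactly one equivalence class if and only if G has no frontier vertices, i.e. F(G) = ∅. -/
namespace IsATrail

variable {V : Type*} {A : V → V → Prop} {k m : ℕ} {a b : ℕ → V × V} {v w : ℕ → V}

theorem take (h : IsATrail A k a v) {n : ℕ} (hn : 1 ≤ n) (hnk : n ≤ k) :
    IsATrail A n a v := by
  obtain ⟨-, harc, hinj, hinc, halt⟩ := h
  exact ⟨hn, fun i hi => harc i (by omega), fun i hi j hj => hinj i (by omega) j (by omega),
    fun i hi => hinc i (by omega), fun i hi => halt i (by omega)⟩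

theorem drop (h : IsATrail A k a v) {n : ℕ} (hnk : n < k) :
    IsATrail A (k - n) (fun i => a (i + n)) (fun i => v (i + n)) := by
  obtain ⟨-, harc, hinj, hinc, halt⟩ := h
  refine ⟨by omega, fun i hi => harc _ (by omega),
    fun i hi j hj hij => by have := hinj _ (by omega) _ (by omega) hij; omega,
    fun i hi => ?_, fun i hi => ?_⟩
  · simpa only [Nat.add_right_comm i 1 n] using hinc (i + n) (by omega)
  · simpa only [Nat.add_right_comm i 1 n, Nat.add_right_comm i 2 n] using halt (i + n) (by omega)

theorem append (hP : IsATrail A k a v) (hQ : IsATrail A m b w) (hvw : v k = w 0)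
    (hjunction : a (k - 1) = (v (k - 1), v k) ↔ b 0 = (w 1, w 0))
    (hdisj : ∀ i < k, ∀ j < m, a i ≠ b j) :
    IsATrail A (k + m) (fun t => if t < k then a t else b (t - k))
      (fun t => if t < k then v t else w (t - k)) := by
  obtain ⟨hk, harcP, hinjP, hincP, haltP⟩ := hP
  obtain ⟨-, harcQ, hinjQ, hincQ, haltQ⟩ := hQ
  set c : ℕ → V × V := fun t => if t < k then a t else b (t - k)
  set u : ℕ → V := fun t => if t < k then v t else w (t - k)
  have hcP : ∀ t < k, c t = a t := fun t ht => if_pos ht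
  have hcQ : ∀ t ≥ k, c t = b (t - k) := fun t ht => if_neg (by omega)
  have huP : ∀ t ≤ k, u t = v t := fun t ht => by
    rcases ht.lt_or_eq with ht | rfl
    · exact if_pos ht
    · simp [u, hvw]
  have huQ : ∀ t ≥ k, u t = w (t - k) := fun t ht => if_neg (by omega)
  have hshift : ∀ t ≥ k, ∀ d, t + d - k = t - k + d := fun t ht d => by omega
  refine ⟨by omega, fun t ht => ?_, fun s hs t ht hst => ?_, fun t ht => ?_, fun t ht => ?_⟩
  · rcases lt_or_ge t k with htk | htk
    · rw [hcP t htk]; exact harcP t htk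
    · rw [hcQ t htk]; exact harcQ _ (by omega)
  · rcases lt_or_ge s k with hsk | hsk <;> rcases lt_or_ge t k with htk | htk
    · rw [hcP s hsk, hcP t htk] at hst; exact hinjP s hsk t htk hst
    · rw [hcP s hsk, hcQ t htk] at hst; exact absurd hst (hdisj s hsk _ (by omega))
    · rw [hcQ s hsk, hcP t htk] at hst; exact absurd hst.symm (hdisj t htk _ (by omega))
    · rw [hcQ s hsk, hcQ t htk] at hst; have := hinjQ _ (by omega) _ (by omega) hst; omega
  · rcases lt_or_ge t k with htk | htk
    · rw [hcP t htk, huP t htk.le, huP (t + 1) htk]; exact hincP t htk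
    · rw [hcQ t htk, huQ t htk, huQ (t + 1) (by omega), hshift t htk]
      exact hincQ _ (by omega)
  · rcases lt_trichotomy (t + 1) k with htk | htk | htk
    · rw [hcP t (by omega), hcP (t + 1) htk, huP t (by omega), huP (t + 1) htk.le,
        huP (t + 2) htk]
      exact haltP t htk
    · obtain rfl : t = k - 1 := by omega
      rw [hcP _ (by omega), huP _ (by omega), htk, show k - 1 + 2 = k + 1 by omega, huP k le_rfl,
        hcQ k le_rfl, huQ (k + 1) (by omega), Nat.sub_self, Nat.add_sub_cancel_left, hvw]
      rwa [hvw] at hjunction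
    · rw [hcQ t (by omega), hcQ (t + 1) (by omega), huQ t (by omega), huQ (t + 1) (by omega),
        huQ (t + 2) (by omega), hshift t (by omega), hshift t (by omega)]
      exact haltQ _ (by omega)

end IsATrail

theorem Prod.eq_mk_iff_snd_eq {α : Type*} {p : α × α} {s t : α} (h : p = (s, t) ∨ p = (t, s)) :
    p = (s, t) ↔ p.2 = t := by
  rcases h with rfl | rfl <;> simp +contextual [Prod.ext_iff, eq_comm]

section

variable {V : Type*} {A : V → V → Prop}

theorem ATrailRel.trans {x y z : V × V} (hxy : ATrailRel A x y) (hyz : ATrailRel A y z) :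
    ATrailRel A x z := by
  classical
  obtain ⟨k, a, v, hP, rfl, hy⟩ := hxy
  obtain ⟨m, b, w, hQ, hb0, rfl⟩ := hyz
  have ⟨hk, _, _, hincP, haltP⟩ := hP
  have ⟨hm, _, hinjQ, hincQ, haltQ⟩ := hQ
  have hex : ∃ i < k, ∃ j < m, a i = b j := ⟨k - 1, by omega, 0, hm, hy.trans hb0.symm⟩
  obtain ⟨hi, j, hj, hij⟩ := Nat.find_spec hex
  set i := Nat.find hex
  have hfirst : ∀ t < i, ∀ s < m, a t ≠ b s := fun t ht s hs hts =>
    Nat.find_min hex ht ⟨by omega, s, hs, hts⟩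
  rcases (show j = m - 1 ∨ j + 1 < m by omega) with rfl | hj1
  · exact ⟨i + 1, a, v, hP.take (by omega) hi, rfl, hij⟩
  rcases Nat.eq_zero_or_pos i with hi0 | hi0
  · refine ⟨m - j, _, _, hQ.drop hj, ?_, ?_⟩
    · rw [zero_add, ← hij, hi0]
    · congr 1; omega
  have hdisj : ∀ t < i + 1, ∀ s < m - (j + 1), a t ≠ b (s + (j + 1)) := by
    intro t ht s hs hts
    rcases (show t < i ∨ t = i by omega) with ht | rfl
    · exact hfirst t ht _ (by omega) hts
    · have := hinjQ j hj _ (by omega) (hij.symm.trans hts); omega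
  have hlast : ∀ n, (fun t => if t < n then a t else b (t - n + (j + 1))) (n + (m - (j + 1)) - 1)
      = b (m - 1) := fun n => by
    dsimp only; rw [if_neg (by omega)]; congr 1; omega
  by_cases hmatch : v (i + 1) = w (j + 1)
  · refine ⟨_, _, _, (hP.take (n := i + 1) (by omega) hi).append (hQ.drop hj1)
      (by rwa [zero_add]) ?_ hdisj, by simp, hlast _⟩
    rw [Nat.add_sub_cancel, zero_add, show 1 + (j + 1) = j + 2 by omega, ← haltQ j hj1,
      Prod.eq_mk_iff_snd_eq (hincP i hi), Prod.eq_mk_iff_snd_eq (hincQ j hj), hij, hmatch]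
  · obtain ⟨hvi, hvi1⟩ : v i = w (j + 1) ∧ v (i + 1) = w j := by
      rcases hincP i hi with h | h <;> rcases hincQ j hj with h' | h' <;>
        rw [hij, h'] at h <;> simp only [Prod.mk.injEq] at h <;> grind
    refine ⟨_, _, _, (hP.take (n := i) hi0 hi.le).append (hQ.drop hj1) (by rwa [zero_add]) ?_
      (fun t ht => hdisj t (by omega)), by simp [hi0], hlast _⟩
    have hturn := haltP (i - 1) (by omega)
    rw [Nat.sub_add_cancel hi0, show i - 1 + 2 = i + 1 by omega] at hturn
    rw [hturn, zero_add, show 1 + (j + 1) = j + 2 by omega, ← haltQ j hj1, hij, hvi, hvi1]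

theorem ATrailRel.of_not_isFrontier {w : V} (hw : ¬ IsFrontier A w) {x y : V × V}
    (hx : A x.1 x.2) (hy : A y.1 y.2) (hxw : x.1 = w ∨ x.2 = w) (hyw : y.1 = w ∨ y.2 = w) :
    ATrailRel A x y :=
  not_not.mp fun hxy => hw ⟨x, y, hx, hy, hxw, hyw, hxy⟩

theorem ATrailRel.of_walk (hF : ∀ w, ¬ IsFrontier A w) {u t : V} (W : (UnderGraph A).Walk u t)
    {x y : V × V} (hx : A x.1 x.2) (hy : A y.1 y.2) (hxu : x.1 = u ∨ x.2 = u)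
    (hyt : y.1 = t ∨ y.2 = t) : ATrailRel A x y := by
  induction W generalizing x with
  | nil => exact .of_not_isFrontier (hF _) hx hy hxu hyt
  | @cons u u' _ hadj W ih =>
    obtain ⟨-, harc | harc⟩ := hadj
    · exact (ATrailRel.of_not_isFrontier (hF u) hx harc hxu (.inl rfl)).trans
        (ih (x := (u, u')) harc (.inr rfl) hyt)
    · exact (ATrailRel.of_not_isFrontier (hF u) hx harc hxu (.inr rfl)).trans
        (ih (x := (u', u)) harc (.inl rfl) hyt)

end

theorem stmt_12_general {V : Type*} (A : V → V → Prop) (hconn : (UnderGraph A).Connected) :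
    (∀ x y : V × V, A x.1 x.2 → A y.1 y.2 → ATrailRel A x y) ↔
      (∀ w : V, ¬ IsFrontier A w) := by
  refine ⟨fun h w ⟨x, y, hx, hy, _, _, hxy⟩ => hxy (h x y hx hy), fun hF x y hx hy => ?_⟩
  obtain ⟨W⟩ := hconn.preconnected x.1 y.1
  exact ATrailRel.of_walk hF W hx hy (.inl rfl) (.inl rfl)

/-- for a connected mixed graph `G` with at least one arc, the relation
`R` has exactly one equivalence class iff `G` has no frontier vertices. -/
theorem stmt_12 {V : Type*} (A : V → V → Prop) (hconn : (UnderGraph A).Connected)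
    (harc : ∃ u v, A u v) :
    (∀ x y : V × V, A x.1 x.2 → A y.1 y.2 → ATrailRel A x y) ↔
      (∀ w : V, ¬ IsFrontier A w) :=
  stmt_12_general A hconn
end

section
/- Let m ≥ 2 and k ≥ 1 be integers. There exists a finite connected mixed graph G such that the relation R on A(G) has exactly m equivalence classes and G has exactly k frontier vertices, if and only if m − 1 ≤ k. -/
/-! Two arcs with a common head are `R`-related, and so are two non-loop arcs with a common
tail. Hence at a vertex `w` the arcs with head `w` form one class and the others a second one:
at most two classes meet at `w`, and exactly two if `w` is a frontier vertex. The frontier vertices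
are thus the edges of a graph on the `m` classes, connected because `G` is, so `m - 1 ≤ k`.

Conversely, take levels `0, …, m` of sizes `1, e + 1, 1, …, 1` with all arcs from each level to
the next. Every trail keeps the level of the head, and any two arcs into the same level are
related, so the classes are the `m` levels `≥ 1`; the frontier vertices are the `m - 1 + e`
vertices of levels `1, …, m - 1`. -/

section ATrail

variable {V : Type*} {A : V → V → Prop}

def Incident (w : V) (x : V × V) : Prop := x.1 = w ∨ x.2 = w

abbrev Arc (A : V → V → Prop) := {p : V × V // A p.1 p.2}

abbrev ArcClass (A : V → V → Prop) := Quot (fun x y : Arc A => ATrailRel A x.val y.val)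

abbrev ArcClass.mk (x : Arc A) : ArcClass A := Quot.mk _ x

namespace ATrailRel

theorem refl_of_arc {x : V × V} (hx : A x.1 x.2) : ATrailRel A x x := by
  refine ⟨1, fun _ => x, fun n => if n = 0 then x.1 else x.2, ⟨le_rfl, fun _ _ => hx, ?_, ?_, ?_⟩,
    rfl, rfl⟩
  · intro i hi j hj _; omega
  · intro i hi
    obtain rfl : i = 0 := by omega
    simp
  · intro i hi; omega

theorem of_two {x y : V × V} (hx : A x.1 x.2) (hy : A y.1 y.2) (hne : x ≠ y) (u v w : V)
    (hxv : x = (u, v) ∨ x = (v, u)) (hyv : y = (v, w) ∨ y = (w, v))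
    (halt : x = (u, v) ↔ y = (w, v)) : ATrailRel A x y := by
  refine ⟨2, fun n => if n = 0 then x else y, fun n => if n = 0 then u else if n = 1 then v else w,
    ⟨by norm_num, ?_, ?_, ?_, ?_⟩, rfl, rfl⟩
  · intro i hi; interval_cases i <;> assumption
  · intro i hi j hj hij
    interval_cases i <;> interval_cases j <;> simp_all
  · intro i hi; interval_cases i <;> assumption
  · intro i hi
    obtain rfl : i = 0 := by omega
    exact halt

theorem of_snd_eq {x y : V × V} (hx : A x.1 x.2) (hy : A y.1 y.2) (h : x.2 = y.2) :
    ATrailRel A x y := by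
  rcases eq_or_ne x y with rfl | hne
  · exact refl_of_arc hx
  refine of_two hx hy hne x.1 x.2 y.1 (Or.inl rfl) (Or.inr (Prod.ext rfl h.symm)) ?_
  simp [Prod.ext_iff, h]

theorem of_fst_eq {x y : V × V} (hx : A x.1 x.2) (hy : A y.1 y.2) (h : x.1 = y.1)
    (hx' : x.1 ≠ x.2) (hy' : y.1 ≠ y.2) : ATrailRel A x y := by
  rcases eq_or_ne x y with rfl | hne
  · exact refl_of_arc hx
  refine of_two hx hy hne x.2 x.1 y.2 (Or.inr rfl) (Or.inl (Prod.ext h.symm rfl)) ?_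
  simp [Prod.ext_iff, hx'.symm, hy']

theorem of_incident {w : V} {x y : V × V} (hx : A x.1 x.2) (hy : A y.1 y.2)
    (hxw : Incident w x) (hyw : Incident w y) (hside : x.2 = w ↔ y.2 = w) : ATrailRel A x y := by
  by_cases h : x.2 = w
  · exact of_snd_eq hx hy (h.trans (hside.1 h).symm)
  · have hy2 : y.2 ≠ w := mt hside.2 h
    have hx1 := hxw.resolve_right h
    have hy1 := hyw.resolve_right hy2
    exact of_fst_eq hx hy (hx1.trans hy1.symm) (hx1 ▸ Ne.symm h) (hy1 ▸ Ne.symm hy2)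

theorem apply_eq {α : Sort*} (f : V × V → α)
    (hf : ∀ x y : V × V, A x.1 x.2 → A y.1 y.2 → x.2 = y.2 ∨ x.1 = y.1 → f x = f y)
    {x y : V × V} (h : ATrailRel A x y) : f x = f y := by
  obtain ⟨k, a, v, ⟨hk, harc, -, hv, halt⟩, rfl, rfl⟩ := h
  have step : ∀ i, i + 1 < k → f (a i) = f (a (i + 1)) := by
    intro i hi
    refine hf _ _ (harc i (by omega)) (harc (i + 1) hi) ?_
    by_cases hc : a i = (v i, v (i + 1))
    · left; rw [hc, (halt i hi).1 hc]
    · right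
      have h1 := (hv i (by omega)).resolve_left hc
      have h2 := (hv (i + 1) hi).resolve_right (mt (halt i hi).2 hc)
      rw [h1, h2]
  have : ∀ i, i < k → f (a 0) = f (a i) := by
    intro i
    induction i with
    | zero => intro _; rfl
    | succ n ih => intro hn; exact (ih (by omega)).trans (step n hn)
  exact this (k - 1) (by omega)

end ATrailRel

theorem IsFrontier.exists_arc_to_and_from {w : V} (h : IsFrontier A w) :
    (∃ u, A u w) ∧ ∃ v, A w v := by
  obtain ⟨x, y, hx, hy, hxw, hyw, hxy⟩ := h
  have hside : ¬ (x.2 = w ↔ y.2 = w) := fun hs => hxy (ATrailRel.of_incident hx hy hxw hyw hs)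
  by_cases h : x.2 = w
  · have hy1 := hyw.resolve_right (fun h' => hside (iff_of_true h h'))
    exact ⟨⟨x.1, h ▸ hx⟩, ⟨y.2, hy1 ▸ hy⟩⟩
  · have hy2 : y.2 = w := by tauto
    have hx1 := hxw.resolve_right h
    exact ⟨⟨y.1, hy2 ▸ hy⟩, ⟨x.2, hx1 ▸ hx⟩⟩

end ATrail

section ClassGraph

variable {V : Type*} {A : V → V → Prop}

theorem exists_classPair_of_isFrontier {w : V} (hw : IsFrontier A w) :
    ∃ e : Sym2 (ArcClass A), ∀ x y : Arc A, Incident w x.1 → Incident w y.1 →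
      ArcClass.mk x ≠ ArcClass.mk y → s(ArcClass.mk x, ArcClass.mk y) = e := by
  obtain ⟨x₀, y₀, hx₀, hy₀, hx₀w, hy₀w, hxy₀⟩ := hw
  refine ⟨s(ArcClass.mk ⟨x₀, hx₀⟩, ArcClass.mk ⟨y₀, hy₀⟩), fun x y hxw hyw hxy => ?_⟩
  have same_class : ∀ a b : Arc A, Incident w a.1 → Incident w b.1 → (a.1.2 = w ↔ b.1.2 = w) →
      ArcClass.mk a = ArcClass.mk b :=
    fun a b haw hbw hab => Quot.sound (ATrailRel.of_incident a.2 b.2 haw hbw hab)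
  have h₀ : ¬ (x₀.2 = w ↔ y₀.2 = w) := fun h => hxy₀ (ATrailRel.of_incident hx₀ hy₀ hx₀w hy₀w h)
  have h : ¬ (x.1.2 = w ↔ y.1.2 = w) := fun h => hxy (same_class x y hxw hyw h)
  by_cases hx : x.1.2 = w ↔ x₀.2 = w
  · rw [same_class x ⟨x₀, hx₀⟩ hxw hx₀w hx, same_class y ⟨y₀, hy₀⟩ hyw hy₀w (by tauto)]
  · rw [same_class x ⟨y₀, hy₀⟩ hxw hy₀w (by tauto), same_class y ⟨x₀, hx₀⟩ hyw hx₀w (by tauto),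
      Sym2.eq_swap]

theorem connected_of_adj_of_incident [Nonempty (ArcClass A)] {H : SimpleGraph (ArcClass A)}
    (hconn : (UnderGraph A).Connected)
    (hadj : ∀ w (x y : Arc A), Incident w x.1 → Incident w y.1 →
      ArcClass.mk x ≠ ArcClass.mk y → H.Adj (ArcClass.mk x) (ArcClass.mk y)) : H.Connected := by
  have reach : ∀ w (x y : Arc A), Incident w x.1 → Incident w y.1 →
      H.Reachable (ArcClass.mk x) (ArcClass.mk y) := fun w x y hx hy => by
    by_cases h : ArcClass.mk x = ArcClass.mk y
    · rw [h]
    · exact (hadj w x y hx hy h).reachable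
  have walk : ∀ u v (p : (UnderGraph A).Walk u v) (x y : Arc A), Incident u x.1 →
      Incident v y.1 → H.Reachable (ArcClass.mk x) (ArcClass.mk y) := by
    intro u v p
    induction p with
    | nil => exact reach _
    | @cons u u' v huu' p ih =>
      intro x y hx hy
      obtain ⟨-, h | h⟩ := huu'
      · exact (reach u x ⟨(u, u'), h⟩ hx (Or.inl rfl)).trans (ih _ y (Or.inr rfl) hy)
      · exact (reach u x ⟨(u', u), h⟩ hx (Or.inr rfl)).trans (ih _ y (Or.inl rfl) hy)
  refine .mk fun q q' => ?_
  induction q using Quot.ind with | mk x => ?_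
  induction q' using Quot.ind with | mk y => ?_
  obtain ⟨p⟩ := hconn.preconnected x.1.1 y.1.1
  exact walk _ _ p x y (Or.inl rfl) (Or.inl rfl)

theorem card_arcClass_le_card_frontier_add_one [Finite V] (hconn : (UnderGraph A).Connected) :
    Nat.card (ArcClass A) ≤ Nat.card {w // IsFrontier A w} + 1 := by
  rcases isEmpty_or_nonempty (ArcClass A) with _ | _
  · simp
  choose g hg using fun w : {w // IsFrontier A w} => exists_classPair_of_isFrontier w.2
  let H := SimpleGraph.fromEdgeSet (Set.range g)
  have hH : H.Connected := by
    refine connected_of_adj_of_incident hconn fun w x y hx hy hxy => ?_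
    have hw : IsFrontier A w := ⟨x.1, y.1, x.2, y.2, hx, hy, fun h => hxy (Quot.sound h)⟩
    exact (SimpleGraph.fromEdgeSet_adj _).2 ⟨⟨⟨w, hw⟩, (hg _ x y hx hy hxy).symm⟩, hxy⟩
  calc Nat.card (ArcClass A) ≤ Nat.card H.edgeSet + 1 := hH.card_vert_le_card_edgeSet_add_one
    _ ≤ Nat.card (Set.range g) + 1 := by
      gcongr
      exact Nat.card_mono (Set.finite_range g) (by simp [H, SimpleGraph.edgeSet_fromEdgeSet])
    _ ≤ Nat.card {w // IsFrontier A w} + 1 := by gcongr; exact Finite.card_range_le g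

end ClassGraph

section Layered

variable {V : Type*} (level : V → ℕ)

def layered (u v : V) : Prop := level v = level u + 1

variable {level}

theorem ATrailRel.level_snd_eq {x y : V × V} (h : ATrailRel (layered level) x y) :
    level x.2 = level y.2 :=
  ATrailRel.apply_eq (fun p => level p.2) (fun x y hx hy hxy => by
    rcases hxy with h | h
    · rw [h]
    · simp only [layered] at hx hy; rw [hx, hy, h]) h

theorem layered_mk_eq_mk_iff (x y : Arc (layered level)) :
    ArcClass.mk x = ArcClass.mk y ↔ level x.1.2 = level y.1.2 := by
  refine ⟨fun h => congrArg (Quot.lift (fun z : Arc (layered level) => level z.1.2)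
    fun _ _ => ATrailRel.level_snd_eq) h, fun h => ?_⟩
  have hx : layered level x.1.1 x.1.2 := x.2
  have hy : layered level y.1.1 y.1.2 := y.2
  have hz : layered level x.1.1 y.1.2 := by unfold layered at hx ⊢; omega
  have ne_of_arc : ∀ {u v}, layered level u v → u ≠ v := fun huv h => by
    subst h; simp [layered] at huv
  calc ArcClass.mk x = ArcClass.mk ⟨(x.1.1, y.1.2), hz⟩ :=
        Quot.sound (ATrailRel.of_fst_eq hx hz rfl (ne_of_arc hx) (ne_of_arc hz))
    _ = ArcClass.mk y := Quot.sound (ATrailRel.of_snd_eq hz hy rfl)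

theorem isFrontier_layered_iff (w : V) :
    IsFrontier (layered level) w ↔ (∃ u, level w = level u + 1) ∧ ∃ v, level v = level w + 1 := by
  refine ⟨IsFrontier.exists_arc_to_and_from, fun ⟨⟨u, hu⟩, ⟨v, hv⟩⟩ => ?_⟩
  refine ⟨(u, w), (w, v), hu, hv, Or.inr rfl, Or.inl rfl, fun h => ?_⟩
  have := h.level_snd_eq
  simp only at this
  omega

end Layered

namespace BlownUpPath

variable (m e : ℕ)

/-- Levels of the directed path `0 → 1 → ⋯ → m` in which vertex `1` is blown up into `e + 1`
copies. -/
def level : Fin (m + 1) ⊕ Fin e → ℕ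
  | .inl j => j
  | .inr _ => 1

variable {m e}

theorem connected : (UnderGraph (layered (level m e))).Connected := by
  have adj : ∀ {u v}, layered (level m e) u v → (UnderGraph (layered (level m e))).Adj u v :=
    fun h => ⟨fun huv => by subst huv; simp [layered] at h, Or.inl h⟩
  have reach : ∀ w, (UnderGraph (layered (level m e))).Reachable (.inl 0) w := by
    have path : ∀ j (hj : j < m + 1),
        (UnderGraph (layered (level m e))).Reachable (.inl 0) (.inl ⟨j, hj⟩) := by
      intro j
      induction j with
      | zero => intro _; rfl
      | succ j ih =>
        exact fun hj => (ih (by omega)).trans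
          (adj (u := .inl ⟨j, by omega⟩) (v := .inl ⟨j + 1, hj⟩) rfl).reachable
    rintro (j | r)
    · exact path j j.2
    · exact (adj (u := .inl 0) (v := .inr r) rfl).reachable
  have : Nonempty (Fin (m + 1) ⊕ Fin e) := ⟨.inl 0⟩
  exact .mk fun u v => (reach u).symm.trans (reach v)

theorem card_arcClass (hm : 0 < m) : Nat.card (ArcClass (layered (level m e))) = m := by
  let arcTo (i : Fin m) : Arc (layered (level m e)) :=
    ⟨(.inl ⟨i, by omega⟩, .inl ⟨i + 1, by omega⟩), rfl⟩
  refine ((Nat.card_eq_of_bijective (fun i => ArcClass.mk (arcTo i)) ⟨fun i j h => ?_, ?_⟩).symm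
    |>.trans (Nat.card_fin m))
  · have := (layered_mk_eq_mk_iff _ _).1 h
    simp only [level, arcTo] at this
    exact Fin.ext (by omega)
  · rintro ⟨x, hx⟩
    have hlt : level m e x.2 - 1 < m := by
      rcases x with ⟨_ | _, j | _⟩ <;> simp only [layered, level] at hx ⊢ <;> omega
    refine ⟨⟨_, hlt⟩, (layered_mk_eq_mk_iff _ _).2 ?_⟩
    have : 1 ≤ level m e x.2 := by simp only [layered] at hx; omega
    show level m e x.2 - 1 + 1 = level m e x.2
    omega

theorem isFrontier_iff (w : Fin (m + 1) ⊕ Fin e) :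
    IsFrontier (layered (level m e)) w ↔ 1 ≤ level m e w ∧ level m e w < m := by
  rw [isFrontier_layered_iff]
  refine ⟨fun ⟨⟨u, hu⟩, ⟨v, hv⟩⟩ => ?_, fun ⟨h₁, h₂⟩ => ?_⟩
  · have : level m e v = 1 ∨ level m e v ≤ m := by
      rcases v with v | v
      exacts [.inr (Nat.le_of_lt_succ v.2), .inl rfl]
    omega
  · exact ⟨⟨.inl ⟨level m e w - 1, by omega⟩, show _ = _ - 1 + 1 by omega⟩,
      ⟨.inl ⟨level m e w + 1, by omega⟩, rfl⟩⟩

theorem card_frontier (hm : 2 ≤ m) :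
    Nat.card {w // IsFrontier (layered (level m e)) w} = m - 1 + e := by
  rw [Nat.card_congr ((Equiv.subtypeEquivRight isFrontier_iff).trans Equiv.subtypeSum),
    Nat.card_sum, ← Nat.card_Ico 1 m, ← Nat.card_eq_finsetCard]
  congr 1
  · exact Nat.card_congr
      { toFun := fun j => ⟨j.1, Finset.mem_Ico.2 j.2⟩
        invFun := fun n => ⟨⟨n, by have := Finset.mem_Ico.1 n.2; omega⟩, Finset.mem_Ico.1 n.2⟩
        left_inv := fun _ => rfl
        right_inv := fun _ => rfl }
  · simp only [level]
    simp [show 1 < m by omega]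

end BlownUpPath

theorem stmt_13_general (m k : ℕ) (hm : 2 ≤ m) :
    (∃ (V : Type) (_ : Fintype V) (A : V → V → Prop),
      (UnderGraph A).Connected ∧
      Nat.card (Quot (fun x y : {p : V × V // A p.1 p.2} =>
        ATrailRel A x.val y.val)) = m ∧
      Nat.card {w : V // IsFrontier A w} = k) ↔ m - 1 ≤ k := by
  constructor
  · rintro ⟨V, _, A, hconn, hclasses, hfrontier⟩
    have := card_arcClass_le_card_frontier_add_one hconn
    rw [hclasses, hfrontier] at this
    omega
  · intro hmk
    refine ⟨_, inferInstance, layered (BlownUpPath.level m (k - (m - 1))), BlownUpPath.connected,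
      BlownUpPath.card_arcClass (by omega), ?_⟩
    rw [BlownUpPath.card_frontier hm]
    omega

/-- for integers `m ≥ 2` and `k ≥ 1`, there exists a finite connected
mixed graph on which `R` has exactly `m` equivalence classes and which has exactly `k`
frontier vertices, iff `m - 1 ≤ k`. -/
theorem stmt_13 (m k : ℕ) (hm : 2 ≤ m) (hk : 1 ≤ k) :
    (∃ (V : Type) (_ : Fintype V) (A : V → V → Prop),
      (UnderGraph A).Connected ∧
      Nat.card (Quot (fun x y : {p : V × V // A p.1 p.2} =>
        ATrailRel A x.val y.val)) = m ∧
      Nat.card {w : V // IsFrontier A w} = k) ↔ m - 1 ≤ k :=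
  stmt_13_general m k hm
end

section
/- Let G and H be finite mixed graphs. Then G and H are TF-isomorphic if and only if the digraphs ADC(G) and ADC(H) are isomorphic, where ADC(G) is the digraph on vertex set V(G)×{0,1} having an arc from (u,0) to (v,1) for each arc (u,v) of G and no other arcs. -/
/-!
An isomorphism `E` of alternating double covers sends vertices with an out-arc to vertices with
an out-arc; in `ADC(G)` these are exactly the copies `(v, false)` of the tails `v` of arcs of `G`.
So `E` restricts to a bijection between the tails of `G` and of `H`, and likewise between the
heads. Isolated vertices of `ADC(G)` may change layer under `E`, so these bijections need not
come from layer-preserving maps; by finiteness they still extend to bijections `α`, `β` of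
`V` onto `W`, and any such extensions form a TF-isomorphism. Conversely a TF-isomorphism
`(α, β)` acts as `α` on layer `false` and as `β` on layer `true`.
-/

/-- The alternating double cover of a mixed graph `G = (V, A)`, taken on the full
vertex set `V × Bool`: there is an arc from `(u, false)` to `(v, true)` for each arc
`(u, v)` of `G`, and no other arcs. -/
def ADCfull {V : Type*} (A : V → V → Prop) : (V × Bool) → (V × Bool) → Prop :=
  fun p q => p.2 = false ∧ q.2 = true ∧ A p.1 q.1

theorem Equiv.exists_extend_subtypeEquiv {V W : Type*} [Finite V] [Finite W]
    (hVW : Nat.card V = Nat.card W) {p : V → Prop} {q : W → Prop}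
    (φ : {v // p v} ≃ {w // q w}) :
    ∃ α : V ≃ W, (∀ v, p v ↔ q (α v)) ∧ ∀ v (hv : p v), α v = φ ⟨v, hv⟩ := by
  classical
  obtain ⟨γ⟩ := Finite.card_eq.mp hVW
  let ψ : {v // p v} ≃ {v // q (γ v)} := φ.trans (γ.subtypeEquiv fun _ => Iff.rfl).symm
  refine ⟨ψ.extendSubtype.trans γ, fun v => ⟨ψ.extendSubtype_mem v, ?_⟩, fun v hv => ?_⟩
  · exact not_imp_not.mp (ψ.extendSubtype_not_mem v)
  · rw [Equiv.trans_apply, ψ.extendSubtype_apply_of_mem v hv]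
    simp [ψ]

namespace RelIso

variable {α β : Type*} {r : α → α → Prop} {s : β → β → Prop}

def domEquiv (e : r ≃r s) : {a // ∃ b, r a b} ≃ {a // ∃ b, s a b} :=
  e.toEquiv.subtypeEquiv fun _ => e.toEquiv.exists_congr fun _ => e.map_rel_iff.symm

def codEquiv (e : r ≃r s) : {b // ∃ a, r a b} ≃ {b // ∃ a, s a b} :=
  e.toEquiv.subtypeEquiv fun _ => e.toEquiv.exists_congr fun _ => e.map_rel_iff.symm

end RelIso

namespace ADCfull

variable {V W : Type*} {A : V → V → Prop} {B : W → W → Prop}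

def domEquiv (A : V → V → Prop) :
    {v // ∃ w, A v w} ≃ {x : V × Bool // ∃ y, ADCfull A x y} where
  toFun v := ⟨(v, false), v.2.elim fun w h => ⟨(w, true), rfl, rfl, h⟩⟩
  invFun x := ⟨x.1.1, x.2.elim fun y h => ⟨y.1, h.2.2⟩⟩
  left_inv _ := rfl
  right_inv := fun ⟨(_, _), _, hb, _⟩ => by cases hb; rfl

def codEquiv (A : V → V → Prop) :
    {v // ∃ u, A u v} ≃ {y : V × Bool // ∃ x, ADCfull A x y} where
  toFun v := ⟨(v, true), v.2.elim fun u h => ⟨(u, false), rfl, rfl, h⟩⟩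
  invFun y := ⟨y.1.1, y.2.elim fun x h => ⟨x.1, h.2.2⟩⟩
  left_inv _ := rfl
  right_inv := fun ⟨(_, _), _, _, hb, _⟩ => by cases hb; rfl

def layerEquiv (α β : V ≃ W) : V × Bool ≃ W × Bool :=
  (Equiv.prodComm _ _).trans
    ((Equiv.prodShear (Equiv.refl Bool) fun b => cond b β α).trans (Equiv.prodComm _ _))

def relIsoOfTF (α β : V ≃ W) (h : ∀ u v, A u v ↔ B (α u) (β v)) :
    ADCfull A ≃r ADCfull B where
  toEquiv := layerEquiv α β
  map_rel_iff' := by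
    rintro ⟨u, _ | _⟩ ⟨v, _ | _⟩ <;> simp [layerEquiv, ADCfull, h]

def tailEquiv (E : ADCfull A ≃r ADCfull B) : {v // ∃ w, A v w} ≃ {w // ∃ x, B w x} :=
  (domEquiv A).trans (E.domEquiv.trans (domEquiv B).symm)

def headEquiv (E : ADCfull A ≃r ADCfull B) : {v // ∃ u, A u v} ≃ {w // ∃ x, B x w} :=
  (codEquiv A).trans (E.codEquiv.trans (codEquiv B).symm)

theorem relIso_apply_false (E : ADCfull A ≃r ADCfull B) {v : V} (hv : ∃ w, A v w) :
    E (v, false) = ((tailEquiv E ⟨v, hv⟩ : W), false) :=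
  Prod.ext rfl <| (E.domEquiv (domEquiv A ⟨v, hv⟩)).2.elim fun _ h => h.1

theorem relIso_apply_true (E : ADCfull A ≃r ADCfull B) {v : V} (hv : ∃ u, A u v) :
    E (v, true) = ((headEquiv E ⟨v, hv⟩ : W), true) :=
  Prod.ext rfl <| (E.codEquiv (codEquiv A ⟨v, hv⟩)).2.elim fun _ h => h.2.1

theorem exists_tfIso_of_relIso [Finite V] [Finite W] (E : ADCfull A ≃r ADCfull B) :
    ∃ α β : V ≃ W, ∀ u v, A u v ↔ B (α u) (β v) := by
  have hcard : Nat.card V = Nat.card W := by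
    simpa using Nat.card_congr E.toEquiv
  obtain ⟨α, hαt, hα⟩ := Equiv.exists_extend_subtypeEquiv hcard (tailEquiv E)
  obtain ⟨β, hβh, hβ⟩ := Equiv.exists_extend_subtypeEquiv hcard (headEquiv E)
  refine ⟨α, β, fun u v => ?_⟩
  by_cases huv : (∃ w, A u w) ∧ ∃ x, A x v
  · obtain ⟨hu, hv⟩ := huv
    calc A u v ↔ ADCfull A (u, false) (v, true) := by simp [ADCfull]
      _ ↔ ADCfull B (E (u, false)) (E (v, true)) := E.map_rel_iff.symm
      _ ↔ B (α u) (β v) := by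
        rw [relIso_apply_false E hu, relIso_apply_true E hv, hα u hu, hβ v hv]
        simp [ADCfull]
  · exact iff_of_false (fun h => huv ⟨⟨v, h⟩, u, h⟩)
      fun h => huv ⟨(hαt u).2 ⟨_, h⟩, (hβh v).2 ⟨_, h⟩⟩

end ADCfull

/-- finite mixed graphs `G` and `H` are TF-isomorphic iff the digraphs
`ADC(G)` and `ADC(H)` are isomorphic. -/
theorem stmt_14 {V W : Type*} [Fintype V] [Fintype W]
    (A : V → V → Prop) (B : W → W → Prop) :
    (∃ α β : V ≃ W, ∀ u v, A u v ↔ B (α u) (β v)) ↔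
    (∃ e : (V × Bool) ≃ (W × Bool), ∀ p q, ADCfull A p q ↔ ADCfull B (e p) (e q)) := by
  constructor
  · rintro ⟨α, β, h⟩
    let E := ADCfull.relIsoOfTF α β h
    exact ⟨E.toEquiv, fun _ _ => E.map_rel_iff.symm⟩
  · rintro ⟨e, he⟩
    exact ADCfull.exists_tfIso_of_relIso ⟨e, (he _ _).symm⟩
end

section
/- A digraph H is isomorphic to ADC⁻(G) for some mixed graph G if and only if H is strongly bipartite and has no isolated vertices, i.e. no vertex of H has both an incoming arc and an outgoing arc, and every vertex of H has at least one incident arc. Moreover, in that case one may take G = H, i.e. H ≅ ADC⁻(H). -/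
/-!
Every arc of ADC⁻(G) goes from a vertex of layer 0 to one of layer 1, so ADC⁻(G) is strongly
bipartite, and each of its vertices is the end of an arc by construction; both properties pass to
isomorphic digraphs. Conversely, if H is strongly bipartite without isolated vertices, sending `w`
to `(w, 1)` when `w` has an incoming arc and to `(w, 0)` otherwise is an isomorphism H ≅ ADC⁻(H).
-/

universe u

/-- The vertex set of the alternating double cover of `G = (V, A)` with isolated
vertices removed: pairs `(u, false)` with `u` having an outgoing arc and pairs
`(v, true)` with `v` having an incoming arc. -/
def ADCm {V : Type u} (A : V → V → Prop) : Type u :=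
  {p : V × Bool // (p.2 = false ∧ ∃ y, A p.1 y) ∨ (p.2 = true ∧ ∃ x, A x p.1)}

/-- The arcs of the alternating double cover with isolated vertices removed:
`((u, false), (v, true))` for each arc `(u, v)` of `G`. -/
def ADCmArc {V : Type u} (A : V → V → Prop) : ADCm A → ADCm A → Prop :=
  fun p q => p.val.2 = false ∧ q.val.2 = true ∧ A p.val.1 q.val.1

section Digraph

variable {α β : Type*}

def IsStronglyBipartite (r : α → α → Prop) : Prop :=
  ∀ w, ¬ ((∃ x, r x w) ∧ (∃ y, r w y))

def HasNoIsolatedVertices (r : α → α → Prop) : Prop :=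
  ∀ w, (∃ x, r x w) ∨ (∃ y, r w y)

variable {r : α → α → Prop} {s : β → β → Prop}

theorem IsStronglyBipartite.of_relIso (e : r ≃r s) (h : IsStronglyBipartite s) :
    IsStronglyBipartite r := by
  rintro w ⟨⟨x, hx⟩, y, hy⟩
  exact h (e w) ⟨⟨e x, e.map_rel_iff.2 hx⟩, e y, e.map_rel_iff.2 hy⟩

theorem HasNoIsolatedVertices.of_relIso (e : r ≃r s) (h : HasNoIsolatedVertices s) :
    HasNoIsolatedVertices r := by
  intro w
  rcases h (e w) with ⟨x, hx⟩ | ⟨y, hy⟩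
  · exact .inl ⟨e.symm x, e.map_rel_iff.1 (by rwa [e.apply_symm_apply])⟩
  · exact .inr ⟨e.symm y, e.map_rel_iff.1 (by rwa [e.apply_symm_apply])⟩

end Digraph

section ADCm

variable {V : Type*} (A : V → V → Prop)

theorem isStronglyBipartite_ADCmArc : IsStronglyBipartite (ADCmArc A) := by
  rintro w ⟨⟨x, hx⟩, y, hy⟩
  exact Bool.false_ne_true (hy.1.symm.trans hx.2.1)

theorem hasNoIsolatedVertices_ADCmArc : HasNoIsolatedVertices (ADCmArc A) := by
  rintro ⟨⟨v, b⟩, ⟨hb, y, hy⟩ | ⟨hb, x, hx⟩⟩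
  · exact .inr ⟨⟨(y, true), .inr ⟨rfl, v, hy⟩⟩, hb, rfl, hy⟩
  · exact .inl ⟨⟨(x, false), .inl ⟨rfl, v, hx⟩⟩, rfl, hb, hx⟩

open scoped Classical

variable {A}

noncomputable def toADCm (hni : HasNoIsolatedVertices A) (v : V) : ADCm A :=
  ⟨(v, decide (∃ x, A x v)), by
    by_cases h : ∃ x, A x v
    · exact .inr ⟨decide_eq_true h, h⟩
    · exact .inl ⟨decide_eq_false h, (hni v).resolve_left h⟩⟩

noncomputable def relIsoADCmArcSelf (hsb : IsStronglyBipartite A)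
    (hni : HasNoIsolatedVertices A) : A ≃r ADCmArc A where
  toFun := toADCm hni
  invFun p := p.val.1
  left_inv _ := rfl
  right_inv := by
    rintro ⟨⟨v, b⟩, hp⟩
    refine Subtype.ext (Prod.ext rfl ?_)
    show decide (∃ x, A x v) = b
    rcases hp with ⟨rfl, hout⟩ | ⟨rfl, hin⟩
    · exact decide_eq_false fun hin => hsb v ⟨hin, hout⟩
    · exact decide_eq_true hin
  map_rel_iff' {u v} :=
    ⟨fun h => h.2.2, fun h => ⟨decide_eq_false fun hin => hsb u ⟨hin, v, h⟩, decide_eq_true ⟨u, h⟩, h⟩⟩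

end ADCm

/-- a digraph `H` is isomorphic to `ADC⁻(G)` for some mixed graph `G`
iff `H` is strongly bipartite (no vertex has both an incoming and an outgoing arc)
and has no isolated vertices; moreover, in that case `H ≅ ADC⁻(H)`. -/
theorem stmt_15 {U : Type u} (B : U → U → Prop) :
    ((∃ (V : Type u) (A : V → V → Prop) (e : U ≃ ADCm A),
        ∀ u v, B u v ↔ ADCmArc A (e u) (e v)) ↔
      ((∀ w, ¬ ((∃ x, B x w) ∧ (∃ y, B w y))) ∧
        (∀ w, (∃ x, B x w) ∨ (∃ y, B w y)))) ∧
    (((∀ w, ¬ ((∃ x, B x w) ∧ (∃ y, B w y))) ∧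
        (∀ w, (∃ x, B x w) ∨ (∃ y, B w y))) →
      ∃ e : U ≃ ADCm B, ∀ u v, B u v ↔ ADCmArc B (e u) (e v)) := by
  have iso_self : IsStronglyBipartite B ∧ HasNoIsolatedVertices B →
      ∃ e : U ≃ ADCm B, ∀ u v, B u v ↔ ADCmArc B (e u) (e v) := fun ⟨hsb, hni⟩ =>
    ⟨(relIsoADCmArcSelf hsb hni).toEquiv, fun _ _ => (relIsoADCmArcSelf hsb hni).map_rel_iff.symm⟩
  refine ⟨⟨?_, fun h => ⟨U, B, iso_self h⟩⟩, iso_self⟩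
  rintro ⟨V, A, e, he⟩
  let e' : B ≃r ADCmArc A := ⟨e, (he _ _).symm⟩
  exact ⟨(isStronglyBipartite_ADCmArc A).of_relIso e', (hasNoIsolatedVertices_ADCmArc A).of_relIso e'⟩
end

section
/- Let G be a strongly bipartite digraph with no isolated vertices (every vertex has at least one incident arc but no vertex has both an incoming and an outgoing arc) on vertex set V. If G is a two-fold orbital digraph, i.e. its arc set equals Γ(u,v) = {(α(u),β(v)) : (α,β) ∈ Γ} for some subgroup Γ of Sym(V)×Sym(V) and some pair of vertices (u,v), then G is an orbital digraph: its arc set equals {(g(u),g(v)) : g ∈ F} for some subgroup F of Sym(V). -/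
open Classical in
/-- The piecewise map acting as `α` on sources and as `β` elsewhere. -/
noncomputable def Stmt18.pw {V : Type*} (A : V → V → Prop) (α β : Equiv.Perm V) (w : V) : V :=
  if ∃ y, A w y then α w else β w

theorem Stmt18.pw_pos {V : Type*} {A : V → V → Prop} {α β : Equiv.Perm V} {w : V}
    (h : ∃ y, A w y) : Stmt18.pw A α β w = α w := if_pos h

theorem Stmt18.pw_neg {V : Type*} {A : V → V → Prop} {α β : Equiv.Perm V} {w : V}
    (h : ¬ ∃ y, A w y) : Stmt18.pw A α β w = β w := if_neg h

/-- let `G = (V, A)` be a strongly bipartite digraph with no isolated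
vertices. If `G` is a two-fold orbital digraph, i.e. its arc set equals
`Γ(u,v) = {(α u, β v) : (α, β) ∈ Γ}` for some subgroup `Γ ≤ Sym(V) × Sym(V)` and pair
`(u, v)`, then `G` is an orbital digraph: its arc set equals `{(g u, g v) : g ∈ F}`
for some subgroup `F ≤ Sym(V)`. -/
theorem stmt_18 {V : Type*} (A : V → V → Prop)
    (hsb : ∀ w, ¬ ((∃ x, A x w) ∧ (∃ y, A w y)))
    (hni : ∀ w, (∃ x, A x w) ∨ (∃ y, A w y))
    (Γ : Subgroup (Equiv.Perm V × Equiv.Perm V)) (u v : V)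
    (horb : ∀ x y, A x y ↔ ∃ p ∈ Γ, p.1 u = x ∧ p.2 v = y) :
    ∃ F : Subgroup (Equiv.Perm V), ∀ x y, A x y ↔ ∃ g ∈ F, g u = x ∧ g v = y := by
  classical
  open Stmt18 in
  have hAuv : A u v := (horb u v).2 ⟨1, one_mem Γ, rfl, rfl⟩
  have hXu : ∃ y, A u y := ⟨v, hAuv⟩
  have hYv : ∃ x, A x v := ⟨u, hAuv⟩
  have hXv : ¬ ∃ y, A v y := fun h => hsb v ⟨hYv, h⟩
  have hX : ∀ p ∈ Γ, ∀ w : V, (∃ y, A w y) → ∃ y, A (p.1 w) y := by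
    rintro p hp w ⟨y, hwy⟩
    obtain ⟨q, hq, hqu, hqv⟩ := (horb w y).1 hwy
    refine ⟨p.2 (q.2 v), (horb _ _).2 ⟨p * q, mul_mem hp hq, ?_, rfl⟩⟩
    show p.1 (q.1 u) = p.1 w
    rw [hqu]
  have hYlem : ∀ p ∈ Γ, ∀ w : V, (∃ x, A x w) → ∃ x, A x (p.2 w) := by
    rintro p hp w ⟨x, hxw⟩
    obtain ⟨q, hq, hqu, hqv⟩ := (horb x w).1 hxw
    refine ⟨p.1 (q.1 u), (horb _ _).2 ⟨p * q, mul_mem hp hq, rfl, ?_⟩⟩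
    show p.2 (q.2 v) = p.2 w
    rw [hqv]
  have hnX : ∀ w : V, (¬ ∃ y, A w y) → ∃ x, A x w := fun w h => (hni w).resolve_right h
  have hX2 : ∀ p ∈ Γ, ∀ w : V, (¬ ∃ y, A w y) → ¬ ∃ y, A (p.2 w) y :=
    fun p hp w h h2 => hsb (p.2 w) ⟨hYlem p hp w (hnX w h), h2⟩
  have hinv : ∀ p ∈ Γ, ∀ w : V, pw A p.1⁻¹ p.2⁻¹ (pw A p.1 p.2 w) = w := by
    intro p hp w
    by_cases h : ∃ y, A w y
    · rw [pw_pos h, pw_pos (hX p hp w h)]; simp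
    · rw [pw_neg h, pw_neg (hX2 p hp w h)]; simp
  have hperm : ∀ p ∈ Γ, ∃ g : Equiv.Perm V, ∀ w, g w = pw A p.1 p.2 w := by
    intro p hp
    refine ⟨⟨pw A p.1 p.2, pw A p.1⁻¹ p.2⁻¹, hinv p hp, ?_⟩, fun w => rfl⟩
    intro w
    have h := hinv p⁻¹ (inv_mem hp) w
    simpa using h
  refine ⟨{ carrier := {g : Equiv.Perm V | ∃ p ∈ Γ, ∀ w, g w = pw A p.1 p.2 w},
            one_mem' := ⟨1, one_mem Γ, fun w => ?_⟩,
            mul_mem' := ?_, inv_mem' := ?_ }, ?_⟩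
  · rintro a b ⟨p, hp, hpa⟩ ⟨q, hq, hqb⟩
    refine ⟨p * q, mul_mem hp hq, fun w => ?_⟩
    by_cases h : ∃ y, A w y
    · rw [Equiv.Perm.mul_apply, hqb w, pw_pos h, hpa _, pw_pos (hX q hq w h), pw_pos h]
      rfl
    · rw [Equiv.Perm.mul_apply, hqb w, pw_neg h, hpa _, pw_neg (hX2 q hq w h), pw_neg h]
      rfl
  · by_cases h : ∃ y, A w y
    · rw [pw_pos h]; rfl
    · rw [pw_neg h]; rfl
  · rintro a ⟨p, hp, hpa⟩
    refine ⟨p⁻¹, inv_mem hp, fun w => ?_⟩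
    show a⁻¹ w = pw A p.1⁻¹ p.2⁻¹ w
    rw [Equiv.Perm.inv_def, Equiv.symm_apply_eq, hpa]
    have h := hinv p⁻¹ (inv_mem hp) w
    simpa using h.symm
  · intro x y
    constructor
    · intro hxy
      obtain ⟨p, hp, h1, h2⟩ := (horb x y).1 hxy
      obtain ⟨g, hg⟩ := hperm p hp
      refine ⟨g, ⟨p, hp, hg⟩, ?_, ?_⟩
      · rw [hg u, pw_pos hXu, h1]
      · rw [hg v, pw_neg hXv, h2]
    · rintro ⟨g, hgF, rfl, rfl⟩
      obtain ⟨p, hp, hg⟩ := hgF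
      refine (horb _ _).2 ⟨p, hp, ?_, ?_⟩
      · rw [hg u, pw_pos hXu]
      · rw [hg v, pw_neg hXv]
end

section
/- Let G be a finite connected bipartite graph and let H be a finite graph which is TF-isomorphic to G but not isomorphic to G. Then H is disconnected with exactly two connected components, and the subgraphs induced by these two components are TF-isomorphic to each other. -/
private lemma tf_bool_eq_not {x y : Bool} (h : x ≠ y) : x = !y := by
  cases x <;> cases y <;> simp_all

private lemma tf_closed {W : Type*} (H : SimpleGraph W) (S : Set W)
    (hcl : ∀ ⦃x y : W⦄, H.Adj x y → x ∈ S → y ∈ S) :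
    ∀ {x y : W}, H.Walk x y → x ∈ S → y ∈ S := by
  intro x y p
  induction p with
  | nil => exact id
  | cons h q ih => exact fun hx => ih (hcl h hx)

private lemma tf_walk {V W : Type*} (G : SimpleGraph V) (H : SimpleGraph W) (C : V → Bool)
    (α β : V ≃ W) (hC : ∀ u v, G.Adj u v → C u ≠ C v)
    (hαβ : ∀ u v, G.Adj u v ↔ H.Adj (α u) (β v)) :
    ∀ {u v : V}, G.Walk u v →
      (C u = C v → H.Reachable (α u) (α v) ∧ H.Reachable (β u) (β v)) ∧
      (C u ≠ C v → H.Reachable (α u) (β v) ∧ H.Reachable (β u) (α v)) := by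
  intro u v p
  induction p with
  | nil => exact ⟨fun _ => ⟨.refl _, .refl _⟩, fun h => absurd rfl h⟩
  | @cons u x v h q ih =>
    have e1 : H.Adj (α u) (β x) := (hαβ u x).mp h
    have e2 : H.Adj (α x) (β u) := (hαβ x u).mp h.symm
    have hux : C u ≠ C x := hC _ _ h
    constructor
    · intro huv
      have hxv : C x ≠ C v := fun hh => hux (huv.trans hh.symm)
      obtain ⟨r1, r2⟩ := ih.2 hxv
      exact ⟨e1.reachable.trans r2, e2.symm.reachable.trans r1⟩
    · intro huv
      have hxv : C x = C v := by
        have h1 := tf_bool_eq_not (Ne.symm hux)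
        have h2 := tf_bool_eq_not (Ne.symm huv)
        rw [h1, h2]
      obtain ⟨r1, r2⟩ := ih.1 hxv
      exact ⟨e1.reachable.trans r2, e2.symm.reachable.trans r1⟩

/-- let `G` be a finite connected bipartite graph and let `H` be a
finite graph TF-isomorphic to `G` but not isomorphic to `G`. Then `H` is disconnected
with exactly two connected components, and the subgraphs induced by the two components
are TF-isomorphic to each other. -/
theorem stmt_19 {V W : Type*} [Fintype V] [Fintype W]
    (G : SimpleGraph V) (H : SimpleGraph W)
    (hconn : G.Connected)
    (hbip : ∃ C : V → Bool, ∀ u v, G.Adj u v → C u ≠ C v)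
    (htf : ∃ α β : V ≃ W, ∀ u v, G.Adj u v ↔ H.Adj (α u) (β v))
    (hniso : ¬ Nonempty (G ≃g H)) :
    ¬ H.Connected ∧
    Nat.card H.ConnectedComponent = 2 ∧
    (∀ c₁ c₂ : H.ConnectedComponent, c₁ ≠ c₂ →
      ∃ α β : ↥c₁.supp ≃ ↥c₂.supp,
        ∀ x y : ↥c₁.supp, H.Adj x.val y.val ↔ H.Adj (α x).val (β y).val) := by
  classical
  obtain ⟨C, hC⟩ := hbip
  obtain ⟨α, β, hαβ⟩ := htf
  have key : ∀ w w' : W, H.Adj w w' ↔ G.Adj (α.symm w) (β.symm w') := by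
    intro w w'
    have := hαβ (α.symm w) (β.symm w')
    simpa using this.symm
  have hedge : ∀ w w', H.Adj w w' → C (α.symm w) ≠ C (β.symm w') :=
    fun w w' h => hC _ _ ((key w w').mp h)
  have Rcc : ∀ u v : V, C u = C v → H.Reachable (α u) (α v) := by
    intro u v h
    obtain ⟨p⟩ := hconn.preconnected u v
    exact ((tf_walk G H C α β hC hαβ p).1 h).1
  have Rab : ∀ u v : V, C u ≠ C v → H.Reachable (α u) (β v) := by
    intro u v h
    obtain ⟨p⟩ := hconn.preconnected u v
    exact ((tf_walk G H C α β hC hαβ p).2 h).1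
  -- there is an edge (else G and H are edgeless and isomorphic)
  obtain ⟨a, b, hab, hca, hcb⟩ : ∃ a b, G.Adj a b ∧ C a = true ∧ C b = false := by
    rcases em (∃ a b, G.Adj a b) with ⟨a, b, hab⟩ | hE
    · cases hca : C a
      · have hcb : C b = true := by
          have := tf_bool_eq_not (Ne.symm (hC a b hab))
          rw [this, hca]; rfl
        exact ⟨b, a, hab.symm, hcb, hca⟩
      · have hcb : C b = false := by
          have := tf_bool_eq_not (Ne.symm (hC a b hab))
          rw [this, hca]; rfl
        exact ⟨a, b, hab, hca, hcb⟩
    · exfalso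
      apply hniso
      have hG : ∀ x y : V, ¬ G.Adj x y := fun x y h => hE ⟨x, y, h⟩
      refine ⟨⟨α, fun {u v} => ?_⟩⟩
      constructor
      · intro h
        exact absurd ((key _ _).mp h) (hG _ _)
      · intro h
        exact absurd h (hG _ _)
  by_cases hQ : ∀ w : W, C (α.symm w) ≠ C (β.symm w)
  · -- main case: H splits into two components
    have hconst : ∀ ⦃x y : W⦄, H.Adj x y → C (α.symm y) = C (α.symm x) := by
      intro x y hxy
      have e1 := hedge x y hxy
      have e2 := hQ y
      rw [tf_bool_eq_not e2, tf_bool_eq_not e1]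
    have hCeq : ∀ w w' : W, H.Reachable w w' → C (α.symm w) = C (α.symm w') := by
      intro w w' h
      obtain ⟨p⟩ := h
      have := tf_closed H {x | C (α.symm x) = C (α.symm w)}
        (fun x y hxy hx => (hconst hxy).trans hx) p rfl
      exact this.symm
    have hCreach : ∀ w w' : W, C (α.symm w) = C (α.symm w') → H.Reachable w w' := by
      intro w w' h
      have := Rcc (α.symm w) (α.symm w') h
      simpa using this
    have hnc : ¬ H.Connected := by
      intro hcon
      have := hCeq (α a) (α b) (hcon.preconnected _ _)
      simp [hca, hcb] at this
    -- the two components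
    have hCeq' : ∀ (v w : W) (p : H.Walk v w), p.IsPath →
        C (α.symm v) = C (α.symm w) := fun v w p _ => hCeq v w p.reachable
    let F : H.ConnectedComponent → Bool :=
      SimpleGraph.ConnectedComponent.lift (fun w => C (α.symm w)) hCeq'
    have hFmk : ∀ w : W, F (H.connectedComponentMk w) = C (α.symm w) := fun _ => rfl
    let e : H.ConnectedComponent ≃ Bool :=
      { toFun := F
        invFun := fun c => H.connectedComponentMk (cond c (α a) (α b))
        left_inv := by
          refine SimpleGraph.ConnectedComponent.ind (fun w => ?_)
          rw [hFmk]
          cases hw : C (α.symm w)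
          · refine SimpleGraph.ConnectedComponent.sound (hCreach _ _ ?_)
            simp [hcb, hw]
          · refine SimpleGraph.ConnectedComponent.sound (hCreach _ _ ?_)
            simp [hca, hw]
        right_inv := by
          intro c
          cases c <;> simp [hFmk, hca, hcb] }
    have hcard : Nat.card H.ConnectedComponent = 2 := by
      rw [Nat.card_congr e]
      simp [Nat.card_eq_fintype_card]
    refine ⟨hnc, hcard, ?_⟩
    intro c₁ c₂ h12
    have hb : F c₁ ≠ F c₂ := fun h => h12 (e.injective h)
    have hFc2 : F c₂ = !(F c₁) := tf_bool_eq_not (Ne.symm hb)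
    have hmem : ∀ (c : H.ConnectedComponent) (w : W),
        w ∈ c.supp ↔ C (α.symm w) = F c := by
      intro c w
      rw [SimpleGraph.ConnectedComponent.mem_supp_iff]
      constructor
      · rintro rfl; rfl
      · intro h
        obtain ⟨v, rfl⟩ := Quot.exists_rep c
        exact SimpleGraph.ConnectedComponent.sound (hCreach w v h)
    have hmap1 : ∀ w : W, C (α.symm (β (α.symm w))) = !(C (α.symm w)) := by
      intro w
      have h2 := hQ (β (α.symm w))
      rw [Equiv.symm_apply_apply] at h2
      exact tf_bool_eq_not h2
    have hmap2 : ∀ w : W, C (α.symm (α (β.symm w))) = !(C (α.symm w)) := by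
      intro w
      rw [Equiv.symm_apply_apply]
      exact tf_bool_eq_not (Ne.symm (hQ w))
    refine ⟨⟨fun x => ⟨β (α.symm x.1), ?_⟩, fun y => ⟨α (β.symm y.1), ?_⟩, ?_, ?_⟩,
            ⟨fun x => ⟨α (β.symm x.1), ?_⟩, fun y => ⟨β (α.symm y.1), ?_⟩, ?_, ?_⟩, ?_⟩
    · rw [hmem, hmap1, (hmem c₁ x.1).mp x.2, hFc2]
    · rw [hmem, hmap2, (hmem c₂ y.1).mp y.2, hFc2, Bool.not_not]
    · intro x; exact Subtype.ext (by simp)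
    · intro y; exact Subtype.ext (by simp)
    · rw [hmem, hmap2, (hmem c₁ x.1).mp x.2, hFc2]
    · rw [hmem, hmap1, (hmem c₂ y.1).mp y.2, hFc2, Bool.not_not]
    · intro x; exact Subtype.ext (by simp)
    · intro y; exact Subtype.ext (by simp)
    · intro x y
      simp only [Equiv.coe_fn_mk]
      have h1 : H.Adj x.1 y.1 ↔ G.Adj (α.symm x.1) (β.symm y.1) := key _ _
      have h2 : H.Adj (β (α.symm x.1)) (α (β.symm y.1)) ↔
          G.Adj (β.symm y.1) (α.symm x.1) := by
        rw [H.adj_comm]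
        exact (hαβ _ _).symm
      rw [h1, h2, G.adj_comm]
  · -- otherwise G ≅ H, contradiction
    exfalso
    apply hniso
    push_neg at hQ
    obtain ⟨w₀, hw₀⟩ := hQ
    have hreachAll : ∀ w : W, H.Reachable w₀ w := by
      intro w
      by_cases hcw : C (α.symm w₀) = C (α.symm w)
      · have := Rcc _ _ hcw
        simpa using this
      · have hne : C (α.symm w) ≠ C (β.symm w₀) := by
          rw [← hw₀]; exact fun h => hcw h.symm
        have := Rab _ _ hne
        simpa using this.symm
    have hall : ∀ w : W, C (α.symm w) = C (β.symm w) := by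
      intro w
      obtain ⟨p⟩ := hreachAll w
      refine tf_closed H {x | C (α.symm x) = C (β.symm x)} ?_ p hw₀
      intro x y hxy hx
      have e1 := hedge x y hxy
      have e2 := hedge y x hxy.symm
      show C (α.symm y) = C (β.symm y)
      rw [tf_bool_eq_not e2, tf_bool_eq_not (Ne.symm e1), hx]
    set γ : V → W := fun v => bif C v then α v else β v with hγ
    have hmix : ∀ x y : V, α x = β y → C x = C y := by
      intro x y hxy
      have h2 := hall (α x)
      rw [Equiv.symm_apply_apply, hxy, Equiv.symm_apply_apply] at h2
      exact h2
    have hγinj : Function.Injective γ := by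
      intro u v h
      cases hu : C u <;> cases hv : C v <;>
        simp only [hγ, hu, hv, Bool.cond_true, Bool.cond_false] at h
      · exact β.injective h
      · have := hmix v u h.symm
        rw [hu, hv] at this
        simp at this
      · have := hmix u v h
        rw [hu, hv] at this
        simp at this
      · exact α.injective h
    have hγbij : Function.Bijective γ :=
      (Fintype.bijective_iff_injective_and_card γ).mpr ⟨hγinj, Fintype.card_congr α⟩
    refine ⟨⟨Equiv.ofBijective γ hγbij, fun {u v} => ?_⟩⟩
    show H.Adj (γ u) (γ v) ↔ G.Adj u v
    cases hu : C u <;> cases hv : C v <;>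
      simp only [hγ, hu, hv, Bool.cond_true, Bool.cond_false]
    · constructor
      · intro h
        exfalso
        have h1 := hedge (β u) (β v) h
        have h2 := hall (β u)
        rw [Equiv.symm_apply_apply] at h1
        rw [Equiv.symm_apply_apply] at h2
        rw [h2, hu, hv] at h1
        exact h1 rfl
      · intro h
        exact absurd (hu.trans hv.symm) (hC u v h)
    · rw [H.adj_comm, ← hαβ v u, G.adj_comm v u]
    · exact (hαβ u v).symm
    · constructor
      · intro h
        exfalso
        have h1 := hedge (α u) (α v) h
        have h2 := hall (α v)
        rw [Equiv.symm_apply_apply] at h1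
        rw [Equiv.symm_apply_apply] at h2
        rw [← h2, hu, hv] at h1
        exact h1 rfl
      · intro h
        exact absurd (hu.trans hv.symm) (hC u v h)
end
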